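/- arXiv:1306.1033 — 3 statements merged into one kernel-verified Lean document; each statement's English description precedes it below -/
import Mathlib

section
/- Let p be a prime and λ a partition, and let i ∈ {0,…,p−1}. Then the number of normal i-nodes of the p-restrictisation λ^rest is at most the number of removable i-nodes of λ, with equality if and only if λ does not have both a removable i-node and an addable i-node lying in a strictly later ramp. -/
/-- `f` represents a partition: weakly decreasing with finitely many nonzero parts.
`f r` is the `(r+1)`-th part (0-indexed). -/
def IsPartition (f : ℕ → ℕ) : Prop :=
  (∀ m n : ℕ, m ≤ n → f n ≤ f m) ∧ ∃ N, ∀ n, N ≤ n → f n = 0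

/-- `(r, c)` (0-indexed) is a node of the Young diagram of `f`. -/
def Cell (f : ℕ → ℕ) (r c : ℕ) : Prop := c < f r

/-- The ramp containing the 0-indexed node `(r, c)`; this equals `c-1+(p-1)(r-1)` in
the paper's 1-indexed convention. -/
def rampOf (p : ℕ) (r c : ℕ) : ℤ := (c : ℤ) + ((p : ℤ) - 1) * (r : ℤ)

/-- The `p`-residue of the node `(r, c)`. -/
def res (p : ℕ) (r c : ℕ) : ZMod p := (c : ZMod p) - (r : ZMod p)

/-- `(r, c)` is a removable node of `f`. -/
def Removable (f : ℕ → ℕ) (r c : ℕ) : Prop := c + 1 = f r ∧ f (r + 1) < f r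

/-- `(r, c)` is an addable node of `f`. -/
def Addable (f : ℕ → ℕ) (r c : ℕ) : Prop := c = f r ∧ (r = 0 ∨ f r < f (r - 1))

/-- `rmp_l(λ)`: the number of nodes of `λ` in ramp `l`. -/
noncomputable def rmp (p : ℕ) (f : ℕ → ℕ) (l : ℤ) : ℕ :=
  Set.ncard {q : ℕ × ℕ | Cell f q.1 q.2 ∧ rampOf p q.1 q.2 = l}

/-- `f` is `p`-restricted: successive differences of parts are `< p`. -/
def PRestricted (p : ℕ) (f : ℕ → ℕ) : Prop := ∀ r, f r < f (r + 1) + p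

/-- `g` is the `p`-restrictisation `f^rest` of `f`: the (unique) `p`-restricted
partition with the same number of nodes in each ramp as `f` (obtained by sliding
all nodes in each ramp as far towards the first row as possible). -/
def IsRest (p : ℕ) (f g : ℕ → ℕ) : Prop :=
  IsPartition g ∧ PRestricted p g ∧ ∀ l : ℤ, rmp p g l = rmp p f l

/-- Row `r` of `f` contains a removable node of residue `i`. -/
def RemRes (p : ℕ) (f : ℕ → ℕ) (i : ZMod p) (r : ℕ) : Prop :=
  ∃ c, Removable f r c ∧ res p r c = i

/-- Row `r` of `f` contains an addable node of residue `i`. -/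
def AddRes (p : ℕ) (f : ℕ → ℕ) (i : ZMod p) (r : ℕ) : Prop :=
  ∃ c, Addable f r c ∧ res p r c = i

/-- Row `r` of `f` contains a normal `i`-node: a removable `i`-node whose `−` sign
survives the reduction of the `i`-signature (read top to bottom, `+` for addable
`i`-nodes and `−` for removable `i`-nodes, successively deleting adjacent pairs `−+`);
equivalently, for every lower row `s` carrying an addable `i`-node, the number of
addable `i`-nodes in rows `(r, s]` is at most the number of removable `i`-nodes in
rows `(r, s)`. -/
def NormalRow (p : ℕ) (f : ℕ → ℕ) (i : ZMod p) (r : ℕ) : Prop :=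
  RemRes p f i r ∧ ∀ s, r < s → AddRes p f i s →
    Set.ncard {t : ℕ | r < t ∧ t ≤ s ∧ AddRes p f i t} ≤
      Set.ncard {t : ℕ | r < t ∧ t < s ∧ RemRes p f i t}

/-- The number of normal `i`-nodes of `f`. -/
noncomputable def norCount (p : ℕ) (f : ℕ → ℕ) (i : ZMod p) : ℕ :=
  Set.ncard {r : ℕ | NormalRow p f i r}

/-- The number of removable `i`-nodes of `f`. -/
noncomputable def remCount (p : ℕ) (f : ℕ → ℕ) (i : ZMod p) : ℕ :=
  Set.ncard {r : ℕ | RemRes p f i r}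

/-- `f` has a removable `i`-node together with an addable `i`-node in a strictly
later ramp. -/
def HasRemAddLater (p : ℕ) (f : ℕ → ℕ) (i : ZMod p) : Prop :=
  ∃ r c s d, Removable f r c ∧ res p r c = i ∧ Addable f s d ∧ res p s d = i ∧
    rampOf p r c < rampOf p s d

/-!
Encode a partition `f` by `rowRamp p f r = f r + (p - 1) r`, the ramp of the first empty position
of row `r`. A removable (addable) `i`-node in row `r` is a value `≡ i + 1` (`≡ i`) not followed
(preceded) by a jump of exactly `p - 1`, equal ramp counts mean equal multisets of values, and
`λ^rest` is the partition whose sequence is the monotone rearrangement of that of `λ`.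

The number of normal nodes is the largest surplus of removable over addable nodes in a final
segment of the signature. For a monotone sequence final segments are value thresholds, and the
threshold surplus, corrected by the number of `(p - 1)`-jumps across the threshold, depends only
on the multiset of values: such a jump pairs a non-removable `(i + 1)`-row with a non-addable
`i`-row. Comparing `λ` with `λ^rest` threshold by threshold gives the bound. It is attained at the
value of the lowest removable `i`-node unless some addable `i`-node lies in a later ramp, in which
case every threshold loses one.
-/

lemma Set.ncard_setOf_eq_add {α : Type*} {P Q S : α → Prop} (hP : {a | P a}.Finite)
    (hPQS : ∀ a, P a ↔ Q a ∨ S a) (hQS : ∀ a, Q a → ¬ S a) :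
    {a | P a}.ncard = {a | Q a}.ncard + {a | S a}.ncard := by
  have hsplit : {a | P a} = {a | Q a} ∪ {a | S a} := Set.ext hPQS
  rw [hsplit] at hP ⊢
  exact Set.ncard_union_eq (Set.disjoint_left.2 hQS) (hP.subset Set.subset_union_left)
    (hP.subset Set.subset_union_right)

lemma Set.ncard_Icc_one_int (C : ℕ) : (Set.Icc (1 : ℤ) C).ncard = C := by
  rw [Set.ncard_eq_toFinset_card', Set.toFinset_Icc, Int.card_Icc]
  omega

namespace Signature

open scoped Classical

variable {R A : ℕ → Prop}

-- `NormalRow p f i` is `IsNormal (RemRes p f i) (AddRes p f i)` by definition.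
def IsNormal (R A : ℕ → Prop) (r : ℕ) : Prop :=
  R r ∧ ∀ s, r < s → A s →
    Set.ncard {t : ℕ | r < t ∧ t ≤ s ∧ A t} ≤ Set.ncard {t : ℕ | r < t ∧ t < s ∧ R t}

noncomputable def surplus (R A : ℕ → Prop) (x : ℕ → ℕ) (v : ℕ) : ℤ :=
  {s | R s ∧ v ≤ x s}.ncard - {s | A s ∧ v ≤ x s}.ncard

lemma ncard_suffix_eq_add {P : ℕ → Prop} (hP : {s | P s}.Finite) {r s : ℕ} (hrs : r ≤ s) :
    {u | P u ∧ r + 1 ≤ u}.ncard =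
      {u | r < u ∧ u ≤ s ∧ P u}.ncard + {u | P u ∧ s + 1 ≤ u}.ncard :=
  Set.ncard_setOf_eq_add (hP.subset fun u hu => hu.1) (fun u => by grind) (fun u => by grind)

lemma ncard_suffix_eq_succ {P : ℕ → Prop} (hP : {s | P s}.Finite) (t : ℕ) :
    ({u | P u ∧ t ≤ u}.ncard : ℤ) = {u | P u ∧ t + 1 ≤ u}.ncard + if P t then 1 else 0 := by
  split_ifs with ht
  · have : {u | P u ∧ t ≤ u} = insert t {u | P u ∧ t + 1 ≤ u} := by ext u; grind
    rw [this, Set.ncard_insert_of_notMem (by simp) (hP.subset fun u hu => hu.1)]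
    push_cast
    ring
  · congr 2
    ext u
    grind

lemma surplus_id_eq_succ (hR : {s | R s}.Finite) (hA : {s | A s}.Finite) (t : ℕ) :
    surplus R A id t = surplus R A id (t + 1) + (if R t then 1 else 0) - if A t then 1 else 0 := by
  simp only [surplus, id]
  rw [ncard_suffix_eq_succ hR, ncard_suffix_eq_succ hA]
  ring

lemma exists_surplus_id_eq_zero (hR : {s | R s}.Finite) (hA : {s | A s}.Finite) :
    ∃ T, ∀ t, T ≤ t → surplus R A id t = 0 := by
  obtain ⟨M, hM⟩ := (hR.union hA).bddAbove
  refine ⟨M + 1, fun t ht => ?_⟩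
  have hempty : ∀ P : ℕ → Prop, (∀ s, P s → s ≤ M) → {s | P s ∧ t ≤ id s} = ∅ :=
    fun P hP => Set.eq_empty_of_forall_notMem fun s ⟨hs, hts⟩ => by
      have := hP s hs; simp only [id] at hts; omega
  simp only [surplus]
  rw [hempty R fun s hs => hM (Or.inl hs), hempty A fun s hs => hM (Or.inr hs)]
  simp

lemma isNormal_iff_surplus_succ_le (hR : {s | R s}.Finite) (hA : {s | A s}.Finite)
    (hRA : ∀ s, R s → ¬ A s) {r : ℕ} :
    IsNormal R A r ↔
      R r ∧ ∀ s, r < s → A s → surplus R A id (s + 1) ≤ surplus R A id (r + 1) := by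
  refine and_congr_right fun _ => forall_congr' fun s => imp_congr_right fun hrs =>
    imp_congr_right fun hs => ?_
  have hstep := surplus_id_eq_succ hR hA s
  rw [if_neg (hRA s · hs), if_pos hs] at hstep
  have hwinR : {u | r < u ∧ u ≤ s ∧ R u} = {u | r < u ∧ u < s ∧ R u} := by
    ext u; grind
  have hcountA := ncard_suffix_eq_add hA hrs.le
  have hcountR := ncard_suffix_eq_add hR hrs.le
  rw [hwinR] at hcountR
  simp only [surplus, id] at hstep ⊢
  omega

lemma isNormal_iff_surplus_le (hR : {s | R s}.Finite) (hA : {s | A s}.Finite)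
    (hRA : ∀ s, R s → ¬ A s) {r : ℕ} :
    IsNormal R A r ↔ R r ∧ ∀ t, r < t → surplus R A id t ≤ surplus R A id (r + 1) := by
  rw [isNormal_iff_surplus_succ_le hR hA hRA]
  refine and_congr_right fun _ => ⟨fun h t hrt => ?_, fun h s hrs _ => h (s + 1) (by omega)⟩
  induction t, hrt using Nat.le_induction with
  | base => exact le_rfl
  | succ t hrt ih =>
    by_cases hAt : A t
    · exact h t hrt hAt
    · have hstep := surplus_id_eq_succ hR hA t
      rw [if_neg hAt] at hstep
      split_ifs at hstep <;> omega

lemma ncard_isNormal_le (hR : {s | R s}.Finite) (hA : {s | A s}.Finite)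
    (hRA : ∀ s, R s → ¬ A s) {C : ℕ} (hC : ∀ t, surplus R A id t ≤ C) :
    {r | IsNormal R A r}.ncard ≤ C := by
  obtain ⟨T, hT⟩ := exists_surplus_id_eq_zero hR hA
  have hnormal : ∀ r, IsNormal R A r → surplus R A id r = surplus R A id (r + 1) + 1 ∧
      0 ≤ surplus R A id (r + 1) ∧ ∀ t, r < t → surplus R A id t ≤ surplus R A id (r + 1) := by
    intro r hr
    obtain ⟨hRr, hle⟩ := (isNormal_iff_surplus_le hR hA hRA).1 hr
    have hstep := surplus_id_eq_succ hR hA r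
    rw [if_pos hRr, if_neg (hRA r hRr)] at hstep
    have := hle (max T (r + 1)) (by omega)
    rw [hT _ (le_max_left _ _)] at this
    exact ⟨by omega, this, hle⟩
  calc {r | IsNormal R A r}.ncard ≤ (Set.Icc (1 : ℤ) C).ncard := by
        -- Along the normal rows `surplus` is strictly decreasing, with values in `[1, C]`.
        refine Set.ncard_le_ncard_of_injOn (surplus R A id) (fun r hr => ?_)
          (fun r hr r' hr' h => ?_) (Set.finite_Icc _ _)
        · have := hnormal r hr
          exact ⟨by omega, by have := hC r; omega⟩
        · by_contra hne
          have hr₁ := hnormal r hr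
          have hr₂ := hnormal r' hr'
          rcases Nat.lt_or_gt_of_ne hne with hlt | hlt
          · have := hr₁.2.2 r' hlt; omega
          · have := hr₂.2.2 r hlt; omega
    _ = C := Set.ncard_Icc_one_int C

lemma exists_isNormal_surplus_eq (hR : {s | R s}.Finite) (hA : {s | A s}.Finite)
    (hRA : ∀ s, R s → ¬ A s) {j : ℤ} {t₀ : ℕ} (hj : 0 < j) (ht₀ : j ≤ surplus R A id t₀) :
    ∃ r, IsNormal R A r ∧ surplus R A id r = j := by
  obtain ⟨T, hT⟩ := exists_surplus_id_eq_zero hR hA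
  have hfin : {t | j ≤ surplus R A id t}.Finite := (Set.finite_Iio T).subset fun t ht => by
    by_contra h
    rw [Set.mem_ofPred_eq, hT t (not_lt.1 h)] at ht
    omega
  obtain ⟨r, hr, hmax⟩ := Set.exists_max_image _ id hfin ⟨t₀, ht₀⟩
  have hlt : ∀ t, r < t → surplus R A id t < j :=
    fun t hrt => not_le.1 fun h => (hmax t h).not_gt hrt
  have hstep := surplus_id_eq_succ hR hA r
  have hr1 := hlt (r + 1) (by omega)
  rw [Set.mem_ofPred_eq] at hr
  have hRr : R r := by
    by_contra h
    rw [if_neg h] at hstep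
    split_ifs at hstep <;> omega
  rw [if_pos hRr, if_neg (hRA r hRr)] at hstep
  refine ⟨r, (isNormal_iff_surplus_le hR hA hRA).2 ⟨hRr, fun t hrt => ?_⟩, by omega⟩
  have := hlt t hrt
  omega

lemma le_ncard_isNormal (hR : {s | R s}.Finite) (hA : {s | A s}.Finite)
    (hRA : ∀ s, R s → ¬ A s) {k t₀ : ℕ} (hk : k ≤ surplus R A id t₀) :
    k ≤ {r | IsNormal R A r}.ncard := by
  have hfin : {r | IsNormal R A r}.Finite := hR.subset fun r hr => hr.1
  calc k = (Set.Icc (1 : ℤ) k).ncard := (Set.ncard_Icc_one_int k).symm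
    _ ≤ (surplus R A id '' {r | IsNormal R A r}).ncard := by
        refine Set.ncard_le_ncard (fun j hj => ?_) (hfin.image _)
        obtain ⟨r, hr, hrj⟩ := exists_isNormal_surplus_eq hR hA hRA hj.1 (hj.2.trans hk)
        exact ⟨r, hr, hrj⟩
    _ ≤ _ := Set.ncard_image_le hfin

lemma exists_surplus_id_eq {b : ℕ → ℕ} (hb : Monotone b) {v : ℕ} (hv : ∃ r, v ≤ b r) :
    ∃ t, surplus R A id t = surplus R A b v := by
  refine ⟨Nat.find hv, ?_⟩
  have hiff : ∀ s, Nat.find hv ≤ s ↔ v ≤ b s :=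
    fun s => ⟨fun h => (Nat.find_spec hv).trans (hb h), fun h => Nat.find_min' hv h⟩
  simp only [surplus, id, hiff]

lemma exists_surplus_id_le_surplus (hR : {s | R s}.Finite) (hA : {s | A s}.Finite)
    {b : ℕ → ℕ} (hb : Monotone b) (hRA : ∀ s s', R s → A s' → b s ≠ b s') (t : ℕ) :
    ∃ v, surplus R A id t ≤ surplus R A b v := by
  have key : ∀ v, (∀ s, R s → t ≤ s → v ≤ b s) → (∀ s, A s → v ≤ b s → t ≤ s) →
      surplus R A id t ≤ surplus R A b v := by
    intro v hRv hAv
    have h1 := Set.ncard_le_ncard (s := {s | R s ∧ t ≤ s}) (t := {s | R s ∧ v ≤ b s})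
      (fun s hs => ⟨hs.1, hRv s hs.1 hs.2⟩) (hR.subset fun s hs => hs.1)
    have h2 := Set.ncard_le_ncard (s := {s | A s ∧ v ≤ b s}) (t := {s | A s ∧ t ≤ s})
      (fun s hs => ⟨hs.1, hAv s hs.1 hs.2⟩) (hA.subset fun s hs => hs.1)
    simp only [surplus, id]
    omega
  by_cases h : ∃ s₀, A s₀ ∧ b s₀ = b t
  · obtain ⟨s₀, hs₀, hs₀t⟩ := h
    refine ⟨b t + 1, key _ (fun s hs hts => ?_) (fun s _ hbs => ?_)⟩
    · exact (hb hts).lt_of_ne fun h => hRA s s₀ hs hs₀ (by rw [← h, hs₀t])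
    · exact le_of_not_gt fun hst => by have := hb hst.le; omega
  · push Not at h
    refine ⟨b t, key _ (fun s _ hts => hb hts) (fun s hs hbs => le_of_not_gt fun hst => ?_)⟩
    exact h s hs (le_antisymm (hb hst.le) hbs)

end Signature

namespace Abacus

open Signature

variable {p q : ℕ} {i : ZMod p} {x a b : ℕ → ℕ}

lemma natCast_eq_neg_one (hq : q + 1 = p) : ((q : ℕ) : ZMod p) = -1 := by
  subst hq
  have := ZMod.natCast_self (q + 1)
  push_cast at this
  linear_combination this

lemma eq_of_natCast_eq {m n : ℕ} (h : (m : ZMod p) = n) (hmn : m ≤ n) (hn : n < m + p) :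
    m = n := by
  have hdvd : p ∣ n - m := by
    rw [← ZMod.natCast_eq_zero_iff, Nat.cast_sub hmn, h, sub_self]
  have := Nat.eq_zero_of_dvd_of_lt hdvd (by omega)
  omega

lemma add_one_ne_self (hp : p ≠ 1) (i : ZMod p) : i + 1 ≠ i := by
  have := ZMod.nontrivial_iff.2 hp
  simp

-- For `x = rowRamp p f` and `q = p - 1` these are the rows of `f` carrying a removable
-- (addable) `i`-node: see `seqRem_rowRamp_iff` and `seqAdd_rowRamp_iff`.
def SeqRem (q : ℕ) (i : ZMod p) (x : ℕ → ℕ) (r : ℕ) : Prop :=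
  x (r + 1) ≠ x r + q ∧ (x r : ZMod p) = i + 1

def SeqAdd (q : ℕ) (i : ZMod p) (x : ℕ → ℕ) (r : ℕ) : Prop :=
  (r = 0 ∨ x r ≠ x (r - 1) + q) ∧ (x r : ZMod p) = i

def EventuallyLinear (q : ℕ) (x : ℕ → ℕ) : Prop := ∃ N, ∀ r, N ≤ r → x r = q * r

noncomputable def crossCount (q : ℕ) (i : ZMod p) (x : ℕ → ℕ) (v : ℕ) : ℕ :=
  {r | x (r + 1) = x r + q ∧ (x r : ZMod p) = i + 1 ∧ x r < v ∧ v ≤ x (r + 1)}.ncard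

noncomputable def classDiff (i : ZMod p) (x : ℕ → ℕ) (v : ℕ) : ℤ :=
  ({r | (x r : ZMod p) = i + 1 ∧ x r < v}.ncard : ℤ) - {r | (x r : ZMod p) = i ∧ x r < v}.ncard

lemma SeqRem.ne_of_seqAdd (hp : p ≠ 1) {r s : ℕ} (hr : SeqRem q i x r) (hs : SeqAdd q i x s) :
    x r ≠ x s := fun h => add_one_ne_self hp i (by rw [← hr.2, h, hs.2])

namespace EventuallyLinear

lemma finite_lt (hx : EventuallyLinear q x) (hq : 0 < q) (v : ℕ) : {r | x r < v}.Finite := by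
  obtain ⟨N, hN⟩ := hx
  refine (Set.finite_Iio (max N v)).subset fun r (hr : x r < v) => Set.mem_Iio.2 ?_
  by_contra h
  have := hN r (by omega)
  have := Nat.le_mul_of_pos_left r hq
  omega

lemma finite_seqRem (hx : EventuallyLinear q x) : {r | SeqRem q i x r}.Finite := by
  obtain ⟨N, hN⟩ := hx
  refine (Set.finite_Iio N).subset fun r hr => ?_
  by_contra h
  simp only [Set.mem_Iio, not_lt] at h
  exact hr.1 (by rw [hN r h, hN (r + 1) (by omega)]; ring)

lemma finite_seqAdd (hx : EventuallyLinear q x) : {r | SeqAdd q i x r}.Finite := by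
  obtain ⟨N, hN⟩ := hx
  refine (Set.finite_Iic N).subset fun r hr => ?_
  by_contra h
  simp only [Set.mem_Iic, not_le] at h
  obtain ⟨rfl | hne, -⟩ := hr
  · omega
  · refine hne ?_
    rw [hN r h.le, hN (r - 1) (by omega), ← Nat.mul_succ]
    congr
    omega

lemma exists_le (hx : EventuallyLinear q x) (hq0 : 0 < q) (v : ℕ) :
    ∃ r, v ≤ x r := by
  obtain ⟨N, hN⟩ := hx
  refine ⟨max N v, ?_⟩
  rw [hN _ (le_max_left _ _)]
  exact (le_max_right N v).trans (Nat.le_mul_of_pos_left _ hq0)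

lemma exists_lt_of_seqRem_or_seqAdd (hx : EventuallyLinear q x) :
    ∃ M, ∀ r, SeqRem q i x r ∨ SeqAdd q i x r → x r < M := by
  obtain ⟨M, hM⟩ := ((hx.finite_seqRem.union hx.finite_seqAdd).image x).bddAbove
  exact ⟨M + 1, fun r hr => Nat.lt_succ_of_le (hM ⟨r, hr, rfl⟩)⟩

end EventuallyLinear

lemma ncard_seqRem_sub_ncard_seqAdd_lt (hq : q + 1 = p) {v : ℕ} (hfin : {r | x r < v}.Finite) :
    ({r | SeqRem q i x r ∧ x r < v}.ncard : ℤ) - {r | SeqAdd q i x r ∧ x r < v}.ncard =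
      classDiff i x v - crossCount q i x v := by
  -- A jump `x (r + 1) = x r + q` from an `(i + 1)`-value makes row `r` non-removable and row
  -- `r + 1` a non-addable `i`-row; `J` collects the jumps below `v`.
  set J := {r | x (r + 1) = x r + q ∧ (x r : ZMod p) = i + 1 ∧ x (r + 1) < v}
  have hcls : {r | (x r : ZMod p) = i + 1 ∧ x r < v}.ncard = {r | SeqRem q i x r ∧ x r < v}.ncard +
      {r | x (r + 1) = x r + q ∧ (x r : ZMod p) = i + 1 ∧ x r < v}.ncard :=
    Set.ncard_setOf_eq_add (hfin.subset fun r hr => hr.2) (fun r => by unfold SeqRem; tauto)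
      (fun r h h' => h.1.1 h'.1)
  have hcross : {r | x (r + 1) = x r + q ∧ (x r : ZMod p) = i + 1 ∧ x r < v}.ncard =
      J.ncard + crossCount q i x v :=
    Set.ncard_setOf_eq_add (hfin.subset fun r hr => hr.2.2) (fun r => by grind)
      (fun r h h' => by grind)
  have hstep : ∀ r, x (r + 1) = x r + q → (x (r + 1) : ZMod p) = x r - 1 := by
    intro r h
    rw [h, Nat.cast_add, natCast_eq_neg_one hq]
    ring
  have hshift : {r | r ≠ 0 ∧ x r = x (r - 1) + q ∧ (x r : ZMod p) = i ∧ x r < v} =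
      (· + 1) '' J := by
    ext s
    simp only [J, Set.mem_ofPred_eq, Set.mem_image]
    constructor
    · rintro ⟨hs0, hs, hcl, hlt⟩
      obtain ⟨r, rfl⟩ := Nat.exists_eq_succ_of_ne_zero hs0
      refine ⟨r, ⟨hs, ?_, hlt⟩, rfl⟩
      have := hstep r hs
      simp only [Nat.succ_eq_add_one] at hcl
      linear_combination hcl - this
    · rintro ⟨r, ⟨hs, hcl, hlt⟩, rfl⟩
      refine ⟨by omega, hs, ?_, hlt⟩
      rw [hstep r hs, hcl]
      ring
  have hcls' : {r | (x r : ZMod p) = i ∧ x r < v}.ncard =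
      {r | SeqAdd q i x r ∧ x r < v}.ncard + J.ncard := by
    rw [← Set.ncard_image_of_injective J (add_left_injective 1), ← hshift]
    exact Set.ncard_setOf_eq_add (hfin.subset fun r hr => hr.2)
      (fun r => by unfold SeqAdd; tauto) (fun r h h' => by unfold SeqAdd at h; tauto)
  simp only [classDiff]
  omega

lemma crossCount_eq_zero (hq : q + 1 = p) {v : ℕ} (hv : (v : ZMod p) = i + 1) :
    crossCount q i x v = 0 := by
  rw [crossCount]
  convert Set.ncard_empty ℕ
  refine Set.eq_empty_of_forall_notMem fun r ⟨_, hcl, hlt, hle⟩ => hlt.ne ?_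
  exact eq_of_natCast_eq (hcl.trans hv.symm) hlt.le (by omega)

lemma exists_ge_natCast_eq [NeZero p] (c : ZMod p) (M : ℕ) :
    ∃ V, M ≤ V ∧ (V : ZMod p) = c :=
  ⟨p * M + c.val, le_add_right (Nat.le_mul_of_pos_left M (NeZero.pos p)), by simp⟩

lemma surplus_eq_classDiff (hq : q + 1 = p) (hfin : ∀ v, {r | x r < v}.Finite) {v V : ℕ}
    (hV : (V : ZMod p) = i + 1) (hRV : ∀ r, SeqRem q i x r → x r < V)
    (hAV : ∀ r, SeqAdd q i x r → x r < V) :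
    surplus (SeqRem q i x) (SeqAdd q i x) x v =
      classDiff i x V - classDiff i x v + crossCount q i x v := by
  have hlow := ncard_seqRem_sub_ncard_seqAdd_lt (i := i) hq (hfin v)
  have hall := ncard_seqRem_sub_ncard_seqAdd_lt (i := i) hq (hfin V)
  rw [crossCount_eq_zero hq hV] at hall
  have hsplit : ∀ P : ℕ → Prop, {r | P r}.Finite → (∀ r, P r → x r < V) →
      {r | P r ∧ x r < V}.ncard = {r | P r ∧ v ≤ x r}.ncard + {r | P r ∧ x r < v}.ncard := by
    intro P hP hPV
    exact Set.ncard_setOf_eq_add (hP.subset fun r hr => hr.1)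
      (fun r => ⟨fun h => (le_or_gt v (x r)).imp (⟨h.1, ·⟩) (⟨h.1, ·⟩),
        fun h => h.elim (fun h => ⟨h.1, hPV r h.1⟩) (fun h => ⟨h.1, hPV r h.1⟩)⟩)
      (fun r h h' => (h.2.trans_lt h'.2).false)
  have hRsplit := hsplit (SeqRem q i x) ((hfin V).subset fun r hr => hRV r hr) hRV
  have hAsplit := hsplit (SeqAdd q i x) ((hfin V).subset fun r hr => hAV r hr) hAV
  simp only [surplus]
  omega

lemma ncard_lt_eq_of_ncard_le_eq (hab : ∀ l, {r | b r ≤ l}.ncard = {r | a r ≤ l}.ncard) (v : ℕ) :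
    {r | b r < v}.ncard = {r | a r < v}.ncard := by
  cases v with
  | zero => simp
  | succ l => simpa only [Nat.lt_succ_iff] using hab l

lemma ncard_and_lt_eq_of_ncard_le_eq (hafin : ∀ v, {r | a r < v}.Finite)
    (hbfin : ∀ v, {r | b r < v}.Finite) (hab : ∀ l, {r | b r ≤ l}.ncard = {r | a r ≤ l}.ncard)
    (P : ℕ → Prop) (v : ℕ) :
    {r | P (b r) ∧ b r < v}.ncard = {r | P (a r) ∧ a r < v}.ncard := by
  induction v with
  | zero => simp
  | succ v ih =>
    by_cases hPv : P v
    · have hsplit : ∀ x : ℕ → ℕ, (∀ v, {r | x r < v}.Finite) →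
          {r | P (x r) ∧ x r < v + 1}.ncard + {r | x r < v}.ncard =
            {r | P (x r) ∧ x r < v}.ncard + {r | x r ≤ v}.ncard := by
        intro x hx
        rw [Set.ncard_setOf_eq_add ((hx (v + 1)).subset fun r hr => hr.2)
            (Q := fun r => P (x r) ∧ x r < v) (S := fun r => x r = v)
            (fun r => by grind) (fun r h h' => by omega),
          Set.ncard_setOf_eq_add (P := fun r => x r ≤ v)
            ((hx (v + 1)).subset fun r hr => Nat.lt_succ_of_le hr) (Q := fun r => x r < v)
            (S := fun r => x r = v) (fun r => by omega) (fun r => by omega)]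
        ring
      have := hsplit a hafin
      have := hsplit b hbfin
      have := hab v
      have := ncard_lt_eq_of_ncard_le_eq hab v
      omega
    · have hsame : ∀ x : ℕ → ℕ, {r | P (x r) ∧ x r < v + 1} = {r | P (x r) ∧ x r < v} := by
        intro x
        ext r
        simp only [Set.mem_ofPred_eq]
        refine ⟨fun ⟨h, hlt⟩ => ⟨h, lt_of_le_of_ne (Nat.lt_succ_iff.1 hlt) ?_⟩,
          fun ⟨h, hlt⟩ => ⟨h, hlt.trans v.lt_succ_self⟩⟩
        rintro rfl
        exact hPv h
      rw [hsame, hsame, ih]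

lemma classDiff_eq_of_ncard_le_eq (hafin : ∀ v, {r | a r < v}.Finite)
    (hbfin : ∀ v, {r | b r < v}.Finite) (hab : ∀ l, {r | b r ≤ l}.ncard = {r | a r ≤ l}.ncard)
    (v : ℕ) : classDiff i b v = classDiff i a v := by
  simp only [classDiff,
    ncard_and_lt_eq_of_ncard_le_eq hafin hbfin hab (fun m : ℕ => (m : ZMod p) = i + 1),
    ncard_and_lt_eq_of_ncard_le_eq hafin hbfin hab (fun m : ℕ => (m : ZMod p) = i)]

lemma exists_eq_of_ncard_le_eq (hafin : ∀ v, {r | a r < v}.Finite)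
    (hbfin : ∀ v, {r | b r < v}.Finite) (hab : ∀ l, {r | b r ≤ l}.ncard = {r | a r ≤ l}.ncard)
    (r : ℕ) : ∃ r', a r' = b r := by
  have hpos : 0 < {s | b s = b r ∧ b s < b r + 1}.ncard :=
    (Set.ncard_pos ((hbfin _).subset fun s hs => hs.2)).2 ⟨r, rfl, Nat.lt_succ_self _⟩
  rw [ncard_and_lt_eq_of_ncard_le_eq hafin hbfin hab (· = b r)] at hpos
  obtain ⟨r', hr', -⟩ := Set.nonempty_of_ncard_ne_zero hpos.ne'
  exact ⟨r', hr'⟩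

lemma crossCount_le_one (hmono : Monotone b) (hbfin : ∀ v, {r | b r < v}.Finite) (v : ℕ) :
    crossCount q i b v ≤ 1 := by
  refine (Set.ncard_le_one ((hbfin v).subset fun r hr => hr.2.2.1)).2 fun r hr r' hr' => ?_
  by_contra hne
  rcases Nat.lt_or_gt_of_ne hne with h | h
  · have := hmono (Nat.succ_le_of_lt h); grind
  · have := hmono (Nat.succ_le_of_lt h); grind

lemma crossCount_le (hmono : Monotone b) (hafin : ∀ v, {r | a r < v}.Finite)
    (hbfin : ∀ v, {r | b r < v}.Finite) (hab : ∀ l, {r | b r ≤ l}.ncard = {r | a r ≤ l}.ncard)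
    (v : ℕ) : crossCount q i b v ≤
      crossCount q i a v + {r | SeqRem q i a r ∧ a r < v ∧ v ≤ a r + q}.ncard := by
  rcases (crossCount_le_one (q := q) (i := i) hmono hbfin v).eq_or_lt with h1 | h0
  · obtain ⟨r₀, hjump₀, hcl, hlt, hle⟩ := Set.nonempty_of_ncard_ne_zero (s := {r | b (r + 1) =
      b r + q ∧ (b r : ZMod p) = i + 1 ∧ b r < v ∧ v ≤ b (r + 1)}) (by rw [← crossCount]; omega)
    obtain ⟨r₁, hr₁⟩ := exists_eq_of_ncard_le_eq hafin hbfin hab r₀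
    by_cases hjump : a (r₁ + 1) = a r₁ + q
    · have : 0 < crossCount q i a v := (Set.ncard_pos ((hafin v).subset fun r hr => hr.2.2.1)).2
        ⟨r₁, hjump, hr₁ ▸ hcl, by omega, by omega⟩
      omega
    · have : 0 < {r | SeqRem q i a r ∧ a r < v ∧ v ≤ a r + q}.ncard :=
        (Set.ncard_pos ((hafin v).subset fun r hr => hr.2.1)).2
          ⟨r₁, ⟨hjump, hr₁ ▸ hcl⟩, by omega, by omega⟩
      omega
  · omega

lemma surplus_sub_crossCount_eq (hq : q + 1 = p) (hq0 : 0 < q) (ha : EventuallyLinear q a)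
    (hb : EventuallyLinear q b) (hab : ∀ l, {r | b r ≤ l}.ncard = {r | a r ≤ l}.ncard) (v : ℕ) :
    surplus (SeqRem q i b) (SeqAdd q i b) b v - crossCount q i b v =
      surplus (SeqRem q i a) (SeqAdd q i a) a v - crossCount q i a v := by
  -- Both sides equal `classDiff V - classDiff v` for a large `V ≡ i + 1`.
  have : NeZero p := ⟨by omega⟩
  obtain ⟨Ma, hMa⟩ := ha.exists_lt_of_seqRem_or_seqAdd (i := i)
  obtain ⟨Mb, hMb⟩ := hb.exists_lt_of_seqRem_or_seqAdd (i := i)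
  obtain ⟨V, hMV, hV⟩ := exists_ge_natCast_eq (i + 1) (Ma + Mb)
  have hsurplus : ∀ x, EventuallyLinear q x → (∀ r, SeqRem q i x r ∨ SeqAdd q i x r → x r < V) →
      surplus (SeqRem q i x) (SeqAdd q i x) x v - crossCount q i x v =
        classDiff i x V - classDiff i x v := by
    intro x hx hxV
    rw [surplus_eq_classDiff hq (hx.finite_lt hq0) hV (fun r hr => hxV r (.inl hr))
      (fun r hr => hxV r (.inr hr))]
    ring
  rw [hsurplus a ha fun r hr => by have := hMa r hr; omega,
    hsurplus b hb fun r hr => by have := hMb r hr; omega,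
    classDiff_eq_of_ncard_le_eq (ha.finite_lt hq0) (hb.finite_lt hq0) hab,
    classDiff_eq_of_ncard_le_eq (ha.finite_lt hq0) (hb.finite_lt hq0) hab]

lemma surplus_add_ncard_le (hq : q + 1 = p) (hq0 : 0 < q) (ha : EventuallyLinear q a)
    (hb : EventuallyLinear q b) (hmono : Monotone b)
    (hab : ∀ l, {r | b r ≤ l}.ncard = {r | a r ≤ l}.ncard) (v : ℕ) :
    surplus (SeqRem q i b) (SeqAdd q i b) b v + {r | SeqAdd q i a r ∧ v ≤ a r}.ncard +
      {r | SeqRem q i a r ∧ a r + q < v}.ncard ≤ {r | SeqRem q i a r}.ncard := by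
  have hinv := surplus_sub_crossCount_eq (i := i) hq hq0 ha hb hab v
  have hcross := crossCount_le (q := q) (i := i) hmono (ha.finite_lt hq0) (hb.finite_lt hq0) hab v
  have hR := ha.finite_seqRem (i := i)
  have hsplit₁ : {r | SeqRem q i a r}.ncard =
      {r | SeqRem q i a r ∧ v ≤ a r}.ncard + {r | SeqRem q i a r ∧ a r < v}.ncard :=
    Set.ncard_setOf_eq_add hR (fun r => by grind) (fun r h h' => by omega)
  have hsplit₂ : {r | SeqRem q i a r ∧ a r < v}.ncard =
      {r | SeqRem q i a r ∧ a r < v ∧ v ≤ a r + q}.ncard +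
        {r | SeqRem q i a r ∧ a r + q < v}.ncard :=
    Set.ncard_setOf_eq_add (hR.subset fun r hr => hr.1) (fun r => by grind) (fun r h h' => by omega)
  simp only [surplus] at hinv ⊢
  omega

lemma surplus_le_ncard_seqRem (hq : q + 1 = p) (hq0 : 0 < q) (ha : EventuallyLinear q a)
    (hb : EventuallyLinear q b) (hmono : Monotone b)
    (hab : ∀ l, {r | b r ≤ l}.ncard = {r | a r ≤ l}.ncard) (v : ℕ) :
    surplus (SeqRem q i b) (SeqAdd q i b) b v ≤ {r | SeqRem q i a r}.ncard := by
  have := surplus_add_ncard_le (i := i) hq hq0 ha hb hmono hab v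
  omega

lemma surplus_lt_ncard_seqRem (hq : q + 1 = p) (hq0 : 0 < q) (ha : EventuallyLinear q a)
    (hb : EventuallyLinear q b) (hmono : Monotone b)
    (hab : ∀ l, {r | b r ≤ l}.ncard = {r | a r ≤ l}.ncard)
    (hlater : ∃ r s, SeqRem q i a r ∧ SeqAdd q i a s ∧ a r ≤ a s) (v : ℕ) :
    surplus (SeqRem q i b) (SeqAdd q i b) b v < {r | SeqRem q i a r}.ncard := by
  obtain ⟨r, s, hr, hs, hrs⟩ := hlater
  have hbound := surplus_add_ncard_le (i := i) hq hq0 ha hb hmono hab v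
  by_cases hv : v ≤ a s
  · have : 0 < {r | SeqAdd q i a r ∧ v ≤ a r}.ncard :=
      (Set.ncard_pos (ha.finite_seqAdd.subset fun r hr => hr.1)).2 ⟨s, hs, hv⟩
    omega
  · -- `a s + 1 ≡ a r (mod p)` rules out `a r ≤ a s < a r + q`.
    have hgap : a r + q < v := by
      by_contra h
      have hcast : (a r : ZMod p) = ((a s + 1 : ℕ) : ZMod p) := by
        rw [hr.2, Nat.cast_add, hs.2, Nat.cast_one]
      have := eq_of_natCast_eq hcast (by omega) (by omega)
      omega
    have : 0 < {r | SeqRem q i a r ∧ a r + q < v}.ncard :=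
      (Set.ncard_pos (ha.finite_seqRem.subset fun r hr => hr.1)).2 ⟨r, hr, hgap⟩
    omega

lemma exists_ncard_seqRem_le_surplus (hq : q + 1 = p) (hq0 : 0 < q) (ha : EventuallyLinear q a)
    (hb : EventuallyLinear q b) (hab : ∀ l, {r | b r ≤ l}.ncard = {r | a r ≤ l}.ncard)
    (hlater : ¬ ∃ r s, SeqRem q i a r ∧ SeqAdd q i a s ∧ a r ≤ a s)
    (hne : {r | SeqRem q i a r}.Nonempty) :
    ∃ v, {r | SeqRem q i a r}.ncard ≤ surplus (SeqRem q i b) (SeqAdd q i b) b v := by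
  obtain ⟨r₀, hr₀, hmin⟩ := Set.exists_min_image _ a ha.finite_seqRem hne
  refine ⟨a r₀, ?_⟩
  have hinv := surplus_sub_crossCount_eq (i := i) hq hq0 ha hb hab (a r₀)
  rw [crossCount_eq_zero hq hr₀.2, crossCount_eq_zero hq hr₀.2] at hinv
  have hR : {r | SeqRem q i a r ∧ a r₀ ≤ a r} = {r | SeqRem q i a r} :=
    Set.ext fun r => ⟨fun h => h.1, fun h => ⟨h, hmin r h⟩⟩
  have hA : {r | SeqAdd q i a r ∧ a r₀ ≤ a r} = ∅ :=
    Set.eq_empty_of_forall_notMem fun s hs => hlater ⟨r₀, s, hr₀, hs⟩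
  have hsurplus : surplus (SeqRem q i a) (SeqAdd q i a) a (a r₀) = {r | SeqRem q i a r}.ncard := by
    simp [surplus, hR, hA]
  omega

theorem ncard_isNormal_le_and_eq_iff (hq : q + 1 = p) (hq0 : 0 < q)
    (ha : EventuallyLinear q a) (hb : EventuallyLinear q b) (hmono : Monotone b)
    (hab : ∀ l, {r | b r ≤ l}.ncard = {r | a r ≤ l}.ncard) :
    {r | IsNormal (SeqRem q i b) (SeqAdd q i b) r}.ncard ≤ {r | SeqRem q i a r}.ncard ∧
      ({r | IsNormal (SeqRem q i b) (SeqAdd q i b) r}.ncard = {r | SeqRem q i a r}.ncard ↔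
        ¬ ∃ r s, SeqRem q i a r ∧ SeqAdd q i a s ∧ a r ≤ a s) := by
  have hp : p ≠ 1 := by omega
  have hR := hb.finite_seqRem (i := i)
  have hA := hb.finite_seqAdd (i := i)
  have hRA : ∀ s, SeqRem q i b s → ¬ SeqAdd q i b s := fun s hs has => hs.ne_of_seqAdd hp has rfl
  have hle : ∀ C : ℕ, (∀ v, surplus (SeqRem q i b) (SeqAdd q i b) b v ≤ C) →
      {r | IsNormal (SeqRem q i b) (SeqAdd q i b) r}.ncard ≤ C := by
    refine fun C hC => ncard_isNormal_le hR hA hRA fun t => ?_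
    obtain ⟨v, hv⟩ := exists_surplus_id_le_surplus hR hA hmono
      (fun s s' hs hs' => hs.ne_of_seqAdd hp hs') t
    exact hv.trans (hC v)
  have hmain := hle _ (surplus_le_ncard_seqRem hq hq0 ha hb hmono hab)
  refine ⟨hmain, fun heq hlater => ?_, fun hlater => le_antisymm hmain ?_⟩
  · obtain ⟨r, -, hr, -⟩ := id hlater
    have hpos : 0 < {r | SeqRem q i a r}.ncard := (Set.ncard_pos ha.finite_seqRem).2 ⟨r, hr⟩
    have := hle ({r | SeqRem q i a r}.ncard - 1) fun v => by
      have := surplus_lt_ncard_seqRem hq hq0 ha hb hmono hab hlater v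
      omega
    omega
  · rcases Set.eq_empty_or_nonempty {r | SeqRem q i a r} with hempty | hne
    · simp [hempty]
    obtain ⟨v, hv⟩ := exists_ncard_seqRem_le_surplus hq hq0 ha hb hab hlater hne
    obtain ⟨t, ht⟩ := exists_surplus_id_eq (R := SeqRem q i b) (A := SeqAdd q i b) hmono
      (hb.exists_le hq0 v)
    exact le_ncard_isNormal hR hA hRA (ht ▸ hv)

end Abacus

open Abacus Signature

-- The ramp of the position `(r, f r)`, just past the end of row `r`.
def rowRamp (p : ℕ) (f : ℕ → ℕ) (r : ℕ) : ℕ := f r + (p - 1) * r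

section Partitions

variable {p : ℕ} {f : ℕ → ℕ} {i : ZMod p}

lemma rampOf_eq (hp : 0 < p) (r c : ℕ) : rampOf p r c = ((c + (p - 1) * r : ℕ) : ℤ) := by
  simp [rampOf, Nat.cast_sub (Nat.one_le_of_lt hp)]

lemma natCast_rowRamp (hp : 0 < p) (f : ℕ → ℕ) (r : ℕ) :
    (rowRamp p f r : ZMod p) = f r - r := by
  rw [rowRamp, Nat.cast_add, Nat.cast_mul, natCast_eq_neg_one (Nat.sub_add_cancel hp)]
  ring

lemma rowRamp_succ_eq_iff (f : ℕ → ℕ) (r : ℕ) :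
    rowRamp p f (r + 1) = rowRamp p f r + (p - 1) ↔ f (r + 1) = f r := by
  simp only [rowRamp, mul_add, mul_one]
  omega

lemma seqRem_rowRamp_iff (hp : 0 < p) (hf : Antitone f) (r : ℕ) :
    SeqRem (p - 1) i (rowRamp p f) r ↔ RemRes p f i r := by
  have hle : f (r + 1) ≤ f r := hf (Nat.le_add_right r 1)
  simp only [SeqRem, RemRes, Removable, res, natCast_rowRamp hp, ne_eq, rowRamp_succ_eq_iff]
  constructor
  · rintro ⟨hne, hcl⟩
    refine ⟨f r - 1, ⟨by omega, by omega⟩, ?_⟩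
    rw [Nat.cast_sub (by omega), Nat.cast_one]
    linear_combination hcl
  · rintro ⟨c, ⟨hc, hlt⟩, hres⟩
    refine ⟨by omega, ?_⟩
    rw [← hc, Nat.cast_add, Nat.cast_one]
    linear_combination hres

lemma seqAdd_rowRamp_iff (hp : 0 < p) (hf : Antitone f) (r : ℕ) :
    SeqAdd (p - 1) i (rowRamp p f) r ↔ AddRes p f i r := by
  simp only [SeqAdd, AddRes, Addable, res, natCast_rowRamp hp]
  cases r with
  | zero => simp
  | succ s =>
    have hle : f (s + 1) ≤ f s := hf (Nat.le_add_right s 1)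
    have hlt : ¬ f (s + 1) = f s ↔ f (s + 1) < f s := by omega
    simp only [Nat.add_sub_cancel, ne_eq, rowRamp_succ_eq_iff, Nat.succ_ne_zero, false_or, hlt,
      and_assoc, exists_eq_left]

lemma hasRemAddLater_iff (hp : 0 < p) (hf : Antitone f) :
    HasRemAddLater p f i ↔ ∃ r s, SeqRem (p - 1) i (rowRamp p f) r ∧
      SeqAdd (p - 1) i (rowRamp p f) s ∧ rowRamp p f r ≤ rowRamp p f s := by
  simp only [seqRem_rowRamp_iff hp hf, seqAdd_rowRamp_iff hp hf, HasRemAddLater, RemRes, AddRes,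
    rampOf_eq hp, Nat.cast_lt]
  constructor
  · rintro ⟨r, c, s, d, hrem, hres, hadd, hres', hlt⟩
    refine ⟨r, s, ⟨c, hrem, hres⟩, ⟨d, hadd, hres'⟩, ?_⟩
    simp only [rowRamp]
    grind [Removable, Addable]
  · rintro ⟨r, s, ⟨c, hrem, hres⟩, ⟨d, hadd, hres'⟩, hle⟩
    refine ⟨r, c, s, d, hrem, hres, hadd, hres', ?_⟩
    simp only [rowRamp] at hle
    grind [Removable, Addable]

lemma eventuallyLinear_rowRamp (hf : ∃ N, ∀ n, N ≤ n → f n = 0) :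
    EventuallyLinear (p - 1) (rowRamp p f) := by
  obtain ⟨N, hN⟩ := hf
  exact ⟨N, fun r hr => by simp [rowRamp, hN r hr]⟩

lemma monotone_rowRamp (hf : PRestricted p f) : Monotone (rowRamp p f) :=
  monotone_nat_of_le_succ fun r => by
    have := hf r
    simp only [rowRamp, mul_add, mul_one]
    omega

lemma rmp_eq_ncard (hp : 0 < p) (f : ℕ → ℕ) (l : ℕ) :
    rmp p f l = {r | (p - 1) * r ≤ l ∧ l < rowRamp p f r}.ncard := by
  have hnodes : {q : ℕ × ℕ | Cell f q.1 q.2 ∧ rampOf p q.1 q.2 = l} =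
      (fun r => (r, l - (p - 1) * r)) '' {r | (p - 1) * r ≤ l ∧ l < rowRamp p f r} := by
    ext ⟨r, c⟩
    simp only [Cell, rampOf_eq hp, Nat.cast_inj, rowRamp, Set.mem_ofPred_eq, Set.mem_image,
      Prod.mk.injEq]
    constructor
    · rintro ⟨hc, rfl⟩
      exact ⟨r, ⟨by omega, by omega⟩, rfl, by omega⟩
    · rintro ⟨r, ⟨h1, h2⟩, rfl, rfl⟩
      exact ⟨by omega, by omega⟩
  rw [rmp, hnodes, Set.ncard_image_of_injective _ fun r r' h => (Prod.mk.inj h).1]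

lemma ncard_rowRamp_le_eq (hp : 1 < p) {g : ℕ → ℕ} (hfg : ∀ l, rmp p g l = rmp p f l) (l : ℕ) :
    {r | rowRamp p g r ≤ l}.ncard = {r | rowRamp p f r ≤ l}.ncard := by
  have hsplit : ∀ f : ℕ → ℕ, {r | (p - 1) * r ≤ l}.ncard =
      rmp p f l + {r | rowRamp p f r ≤ l}.ncard := by
    intro f
    have hfin : {r | (p - 1) * r ≤ l}.Finite :=
      (Set.finite_Iic l).subset fun r (hr : (p - 1) * r ≤ l) =>
        (Nat.le_mul_of_pos_left r (by omega)).trans hr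
    rw [rmp_eq_ncard (by omega)]
    exact Set.ncard_setOf_eq_add hfin (fun r => by simp only [rowRamp]; omega)
      (fun r h h' => by omega)
  have := hsplit f
  have := hsplit g
  have := hfg l
  omega

lemma remCount_eq (hp : 0 < p) (hf : Antitone f) :
    remCount p f i = {r | SeqRem (p - 1) i (rowRamp p f) r}.ncard := by
  simp only [remCount, seqRem_rowRamp_iff hp hf]

lemma norCount_eq (hp : 0 < p) (hf : Antitone f) :
    norCount p f i =
      {r | IsNormal (SeqRem (p - 1) i (rowRamp p f)) (SeqAdd (p - 1) i (rowRamp p f)) r}.ncard := by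
  have hR : SeqRem (p - 1) i (rowRamp p f) = RemRes p f i :=
    funext fun r => propext (seqRem_rowRamp_iff hp hf r)
  have hA : SeqAdd (p - 1) i (rowRamp p f) = AddRes p f i :=
    funext fun r => propext (seqAdd_rowRamp_iff hp hf r)
  rw [hR, hA]
  rfl

end Partitions

/-- The number of normal `i`-nodes of `λ^rest` is at most the number of removable
`i`-nodes of `λ`, with equality iff `λ` does not have both a removable `i`-node and
an addable `i`-node in a strictly later ramp. -/
theorem stmt5 (p : ℕ) (hp : p.Prime) (f : ℕ → ℕ) (hf : IsPartition f) (i : ZMod p)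
    (g : ℕ → ℕ) (hg : IsRest p f g) :
    norCount p g i ≤ remCount p f i ∧
      (norCount p g i = remCount p f i ↔ ¬ HasRemAddLater p f i) := by
  obtain ⟨hf_anti, hf_fin⟩ := hf
  obtain ⟨⟨hg_anti, hg_fin⟩, hg_rest, hg_rmp⟩ := hg
  rw [norCount_eq hp.pos hg_anti, remCount_eq hp.pos hf_anti, hasRemAddLater_iff hp.pos hf_anti]
  exact ncard_isNormal_le_and_eq_iff (Nat.sub_add_cancel hp.one_le) (Nat.sub_pos_of_lt hp.one_lt)
    (eventuallyLinear_rowRamp hf_fin) (eventuallyLinear_rowRamp hg_fin) (monotone_rowRamp hg_rest)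
    (ncard_rowRamp_le_eq hp.one_lt fun l => hg_rmp l)
end

section
/- If λ is a p-quotient-separated partition and λ has at least two addable i-nodes for some i ∈ ℤ/pℤ, then q_{i−1}(λ) > q_i(λ). -/
/-- The set of occupied positions (beads) in the abacus display of the partition `f`:
there is a bead at position `f_j − j` for each `j ≥ 1`. -/
def Occ (f : ℕ → ℕ) : Set ℤ := {x : ℤ | ∃ j : ℕ, x = (f j : ℤ) - ((j : ℤ) + 1)}

/-- `q_i(λ)`: the position of the first vacant position on runner `i` in the abacus
display of the `p`-core of `λ` (computed via the `charge` of runner `i`, which is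
invariant under sliding beads up the runner). -/
noncomputable def qpos (p : ℕ) (f : ℕ → ℕ) (i : ZMod p) : ℤ :=
  (i.val : ℤ) + p *
    ((Set.ncard {x : ℤ | x ∈ Occ f ∧ (x : ZMod p) = i ∧ (i.val : ℤ) ≤ x} : ℤ) -
     (Set.ncard {x : ℤ | x ∉ Occ f ∧ (x : ZMod p) = i ∧ x < (i.val : ℤ)} : ℤ))

/-- The first vacant position on runner `i` of the abacus display of `f`. -/
noncomputable def firstSpace (p : ℕ) (f : ℕ → ℕ) (i : ZMod p) : ℤ :=
  sInf {x : ℤ | (x : ZMod p) = i ∧ x ∉ Occ f}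

/-- The last occupied position on runner `i` of the abacus display of `f`. -/
noncomputable def lastBead (p : ℕ) (f : ℕ → ℕ) (i : ZMod p) : ℤ :=
  sSup {x : ℤ | (x : ZMod p) = i ∧ x ∈ Occ f}

/-- `f` is `p`-quotient-separated: there do not exist runners `i ≠ j` such that the
first space on runner `i` is earlier than the last bead on runner `j` and the first
space on runner `j` is earlier than the last bead on runner `i`. -/
def QSep (p : ℕ) (f : ℕ → ℕ) : Prop :=
  ¬ ∃ i j : ZMod p, i ≠ j ∧ firstSpace p f i < lastBead p f j ∧
      firstSpace p f j < lastBead p f i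

/-- The position of the `(k+1)`-th lowest (i.e. latest) bead on runner `i`. -/
noncomputable def nthBead (p : ℕ) (f : ℕ → ℕ) (i : ZMod p) : ℕ → ℤ
  | 0 => sSup {x : ℤ | x ∈ Occ f ∧ (x : ZMod p) = i}
  | k + 1 => sSup {x : ℤ | x ∈ Occ f ∧ (x : ZMod p) = i ∧ x < nthBead p f i k}

/-- The `p`-quotient component `λ^{(i)}`, as a parts function: its `(k+1)`-th part is
the number of vacant positions on runner `i` earlier than the `(k+1)`-th lowest bead
on runner `i`. -/
noncomputable def quotFn (p : ℕ) (f : ℕ → ℕ) (i : ZMod p) : ℕ → ℕ :=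
  fun k => Set.ncard {x : ℤ | x ∉ Occ f ∧ (x : ZMod p) = i ∧ x < nthBead p f i k}

/-!
A space on runner `i` before a bead on runner `i - 1` makes the first space of runner `i` precede
the last bead of runner `i - 1`, so quotient-separation puts the last bead `L` of runner `i` before
the first space `F` of runner `i - 1`. Two addable `i`-nodes in rows `r < r'` supply such a pair:
the space just after the bead of row `r'`, and the bead of row `r`.

The charge of a runner at a position `T` on it (beads from `T` minus spaces before `T`) drops by
one when `T` advances by `p`, so `q_i(λ) = L + p - p s` and `q_{i-1}(λ) = F + p b`, where `s`
counts the spaces before `L + p` on runner `i` and `b` the beads from `F` on runner `i - 1`.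
Either `s` or `b` is positive, or the space and the bead above both lie in `[L + p, F)`; in each
case `q_i(λ) ≤ q_{i-1}(λ)`, and equality is impossible since `q_j(λ) ≡ j (mod p)`.
-/

section Abacus

variable {p : ℕ} {f : ℕ → ℕ}

def beadsFrom (p : ℕ) (f : ℕ → ℕ) (i : ZMod p) (T : ℤ) : Set ℤ :=
  {x : ℤ | x ∈ Occ f ∧ (x : ZMod p) = i ∧ T ≤ x}

def spacesBelow (p : ℕ) (f : ℕ → ℕ) (i : ZMod p) (T : ℤ) : Set ℤ :=
  {x : ℤ | x ∉ Occ f ∧ (x : ZMod p) = i ∧ x < T}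

noncomputable def charge (p : ℕ) (f : ℕ → ℕ) (i : ZMod p) (T : ℤ) : ℤ :=
  (beadsFrom p f i T).ncard - (spacesBelow p f i T).ncard

theorem qpos_eq_val_add_charge (i : ZMod p) :
    qpos p f i = (i.val : ℤ) + p * charge p f i i.val := rfl

theorem IsPartition.lt_of_mem_occ (hf : IsPartition f) {x : ℤ} (hx : x ∈ Occ f) :
    x < f 0 := by
  obtain ⟨j, rfl⟩ := hx
  have := hf.1 0 j j.zero_le
  omega

theorem IsPartition.exists_forall_le_mem_occ (hf : IsPartition f) :
    ∃ M : ℤ, ∀ x ≤ M, x ∈ Occ f := by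
  obtain ⟨N, hN⟩ := hf.2
  refine ⟨-N - 1, fun x hx => ⟨(-x - 1).toNat, ?_⟩⟩
  rw [hN _ (by omega)]
  omega

theorem IsPartition.bddAbove_occ (hf : IsPartition f) : BddAbove (Occ f) :=
  ⟨f 0, fun _ hx => (hf.lt_of_mem_occ hx).le⟩

theorem IsPartition.bddBelow_compl_occ (hf : IsPartition f) : BddBelow (Occ f)ᶜ := by
  obtain ⟨M, hM⟩ := hf.exists_forall_le_mem_occ
  exact ⟨M, fun x hx => le_of_not_gt fun h => hx (hM x h.le)⟩

theorem IsPartition.finite_beadsFrom (hf : IsPartition f) (i : ZMod p) (T : ℤ) :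
    (beadsFrom p f i T).Finite :=
  (Set.finite_Icc T (f 0)).subset fun _ ⟨hx, _, hT⟩ => ⟨hT, (hf.lt_of_mem_occ hx).le⟩

theorem IsPartition.finite_spacesBelow (hf : IsPartition f) (i : ZMod p) (T : ℤ) :
    (spacesBelow p f i T).Finite := by
  obtain ⟨M, hM⟩ := hf.bddBelow_compl_occ
  exact (Set.finite_Icc M T).subset fun x ⟨hx, _, hT⟩ => ⟨hM hx, hT.le⟩

theorem le_iff_eq_or_add_le_of_intCast_eq [NeZero p] {x T : ℤ}
    (h : (x : ZMod p) = T) : T ≤ x ↔ x = T ∨ T + p ≤ x := by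
  obtain ⟨k, hk⟩ := (ZMod.intCast_eq_intCast_iff_dvd_sub _ _ _).mp h.symm
  have hp : (0 : ℤ) < p := by exact_mod_cast NeZero.pos p
  rcases lt_trichotomy k 0 with hk0 | rfl | hk0
  · constructor
    · intro; nlinarith
    · rintro (rfl | h) <;> nlinarith
  · omega
  · constructor
    · intro; right; nlinarith
    · rintro (rfl | h) <;> nlinarith

theorem charge_add_self [NeZero p] (hf : IsPartition f) {i : ZMod p} {T : ℤ}
    (hT : (T : ZMod p) = i) : charge p f i (T + p) = charge p f i T - 1 := by
  have step : ∀ x : ℤ, (x : ZMod p) = i → (T ≤ x ↔ x = T ∨ T + p ≤ x) := fun x hx =>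
    le_iff_eq_or_add_le_of_intCast_eq (hx.trans hT.symm)
  have hp : (0 : ℤ) < p := by exact_mod_cast NeZero.pos p
  by_cases hTocc : T ∈ Occ f
  · have hB : beadsFrom p f i T = insert T (beadsFrom p f i (T + p)) := by
      ext x
      simp only [beadsFrom, Set.mem_ofPred_eq, Set.mem_insert_iff]
      grind
    have hS : spacesBelow p f i (T + p) = spacesBelow p f i T := by
      ext x
      simp only [spacesBelow, Set.mem_ofPred_eq]
      grind
    have hTB : T ∉ beadsFrom p f i (T + p) := fun h => by
      have := h.2.2; omega
    rw [charge, charge, hB, hS, Set.ncard_insert_of_notMem hTB (hf.finite_beadsFrom i _)]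
    push_cast; ring
  · have hB : beadsFrom p f i (T + p) = beadsFrom p f i T := by
      ext x
      simp only [beadsFrom, Set.mem_ofPred_eq]
      grind
    have hS : spacesBelow p f i (T + p) = insert T (spacesBelow p f i T) := by
      ext x
      simp only [spacesBelow, Set.mem_ofPred_eq, Set.mem_insert_iff]
      grind
    have hTS : T ∉ spacesBelow p f i T := fun h => lt_irrefl T h.2.2
    rw [charge, charge, hB, hS, Set.ncard_insert_of_notMem hTS (hf.finite_spacesBelow i _)]
    push_cast; ring

theorem charge_add_mul_self [NeZero p] (hf : IsPartition f) {i : ZMod p} {T : ℤ}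
    (hT : (T : ZMod p) = i) (k : ℤ) : charge p f i (T + k * p) = charge p f i T - k := by
  have hTk : ∀ k : ℤ, ((T + k * p : ℤ) : ZMod p) = i := fun k => by simp [hT]
  induction k using Int.induction_on with
  | zero => simp
  | succ k ih => rw [add_mul, one_mul, ← add_assoc, charge_add_self hf (hTk k), ih]; ring
  | pred k ih =>
    have := charge_add_self hf (hTk (-k - 1))
    rw [add_assoc, ← add_one_mul, sub_add_cancel, ih] at this
    linarith

theorem qpos_eq_add_mul_charge [NeZero p] (hf : IsPartition f) {i : ZMod p} {T : ℤ}
    (hT : (T : ZMod p) = i) : qpos p f i = T + p * charge p f i T := by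
  have hval : ((i.val : ℤ) : ZMod p) = (T : ZMod p) := by simp [hT]
  obtain ⟨k, hk⟩ := (ZMod.intCast_eq_intCast_iff_dvd_sub _ _ _).mp hval
  obtain rfl : T = i.val + k * p := by linarith
  rw [qpos_eq_val_add_charge, charge_add_mul_self hf (by simp) k]
  ring

theorem intCast_qpos [NeZero p] (f : ℕ → ℕ) (i : ZMod p) : ((qpos p f i : ℤ) : ZMod p) = i := by
  simp [qpos]

theorem exists_intCast_eq_le [NeZero p] (i : ZMod p) (M : ℤ) :
    ∃ x : ℤ, (x : ZMod p) = i ∧ x ≤ M := by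
  obtain ⟨t, rfl⟩ := ZMod.intCast_surjective i
  refine ⟨M - (M - t) % p, by simp [ZMod.intCast_mod], ?_⟩
  have := Int.emod_nonneg (M - t) (Int.natCast_ne_zero.mpr (NeZero.ne p))
  omega

theorem exists_intCast_eq_ge [NeZero p] (i : ZMod p) (M : ℤ) :
    ∃ x : ℤ, (x : ZMod p) = i ∧ M ≤ x := by
  obtain ⟨t, rfl⟩ := ZMod.intCast_surjective i
  refine ⟨M + (t - M) % p, by simp [ZMod.intCast_mod], ?_⟩
  have := Int.emod_nonneg (t - M) (Int.natCast_ne_zero.mpr (NeZero.ne p))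
  omega

theorem IsPartition.bddAbove_beads (hf : IsPartition f) (i : ZMod p) :
    BddAbove {x : ℤ | (x : ZMod p) = i ∧ x ∈ Occ f} :=
  hf.bddAbove_occ.mono fun _ hx => hx.2

theorem IsPartition.bddBelow_spaces (hf : IsPartition f) (i : ZMod p) :
    BddBelow {x : ℤ | (x : ZMod p) = i ∧ x ∉ Occ f} :=
  hf.bddBelow_compl_occ.mono fun _ hx => hx.2

theorem IsPartition.lastBead_mem [NeZero p] (hf : IsPartition f) (i : ZMod p) :
    (lastBead p f i : ZMod p) = i ∧ lastBead p f i ∈ Occ f := by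
  obtain ⟨M, hM⟩ := hf.exists_forall_le_mem_occ
  obtain ⟨x, hxi, hxM⟩ := exists_intCast_eq_le i M
  exact Int.csSup_mem (s := {x : ℤ | (x : ZMod p) = i ∧ x ∈ Occ f}) ⟨x, hxi, hM x hxM⟩
    (hf.bddAbove_beads i)

theorem IsPartition.firstSpace_mem [NeZero p] (hf : IsPartition f) (i : ZMod p) :
    (firstSpace p f i : ZMod p) = i ∧ firstSpace p f i ∉ Occ f := by
  obtain ⟨x, hxi, hxM⟩ := exists_intCast_eq_ge i (f 0)
  exact Int.csInf_mem (s := {x : ℤ | (x : ZMod p) = i ∧ x ∉ Occ f})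
    ⟨x, hxi, fun h => (hf.lt_of_mem_occ h).not_ge hxM⟩ (hf.bddBelow_spaces i)

theorem IsPartition.le_lastBead (hf : IsPartition f) {i : ZMod p} {x : ℤ}
    (hxi : (x : ZMod p) = i) (hx : x ∈ Occ f) : x ≤ lastBead p f i :=
  le_csSup (hf.bddAbove_beads i) ⟨hxi, hx⟩

theorem IsPartition.firstSpace_le (hf : IsPartition f) {i : ZMod p} {x : ℤ}
    (hxi : (x : ZMod p) = i) (hx : x ∉ Occ f) : firstSpace p f i ≤ x :=
  csInf_le (hf.bddBelow_spaces i) ⟨hxi, hx⟩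

theorem IsPartition.qpos_eq_lastBead [NeZero p] (hf : IsPartition f) (i : ZMod p) :
    qpos p f i = lastBead p f i + p -
      p * (spacesBelow p f i (lastBead p f i + p)).ncard := by
  have hp : (0 : ℤ) < p := by exact_mod_cast NeZero.pos p
  have hempty : beadsFrom p f i (lastBead p f i + p) = ∅ :=
    Set.eq_empty_of_forall_notMem fun x ⟨hx, hxi, hLx⟩ => by
      have := hf.le_lastBead hxi hx
      omega
  rw [qpos_eq_add_mul_charge hf (T := lastBead p f i + p) (by simp [(hf.lastBead_mem i).1]),
    charge, hempty]
  simp only [Set.ncard_empty]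
  ring

theorem IsPartition.qpos_eq_firstSpace [NeZero p] (hf : IsPartition f) (i : ZMod p) :
    qpos p f i = firstSpace p f i + p * (beadsFrom p f i (firstSpace p f i)).ncard := by
  have hempty : spacesBelow p f i (firstSpace p f i) = ∅ :=
    Set.eq_empty_of_forall_notMem fun x ⟨hx, hxi, hxF⟩ => (hf.firstSpace_le hxi hx).not_gt hxF
  rw [qpos_eq_add_mul_charge hf (hf.firstSpace_mem i).1, charge, hempty]
  simp

theorem QSep.qpos_lt_of_space_lt_bead [NeZero p] (hqs : QSep p f) (hf : IsPartition f)
    {j k : ZMod p} (hjk : j ≠ k) {z y : ℤ} (hz : z ∉ Occ f) (hzj : (z : ZMod p) = j)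
    (hy : y ∈ Occ f) (hyk : (y : ZMod p) = k) (hzy : z < y) : qpos p f j < qpos p f k := by
  set L := lastBead p f j
  set F := firstSpace p f k
  have hLF : L ≤ F := le_of_not_gt fun hFL => hqs ⟨j, k, hjk,
    (hf.firstSpace_le hzj hz).trans_lt (hzy.trans_le (hf.le_lastBead hyk hy)), hFL⟩
  have hp : (0 : ℤ) < p := by exact_mod_cast NeZero.pos p
  set s := (spacesBelow p f j (L + p)).ncard
  set b := (beadsFrom p f k F).ncard
  have hs : (0 : ℤ) ≤ p * s := by positivity
  have hb : (0 : ℤ) ≤ p * b := by positivity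
  have hle : qpos p f j ≤ qpos p f k := by
    rw [hf.qpos_eq_lastBead, hf.qpos_eq_firstSpace]
    rcases lt_or_ge z (L + p) with hzL | hLz
    · have : 0 < s := (Set.ncard_pos (hf.finite_spacesBelow j _)).mpr ⟨z, hz, hzj, hzL⟩
      have : (p : ℤ) ≤ p * s := le_mul_of_one_le_right hp.le (by exact_mod_cast this)
      linarith
    rcases le_or_gt F y with hFy | hyF
    · have : 0 < b := (Set.ncard_pos (hf.finite_beadsFrom k _)).mpr ⟨y, hy, hyk, hFy⟩
      have : (p : ℤ) ≤ p * b := le_mul_of_one_le_right hp.le (by exact_mod_cast this)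
      linarith
    · linarith
  exact hle.lt_of_ne fun h => hjk (by rw [← intCast_qpos f j, h, intCast_qpos])

theorem res_eq_intCast (p r c : ℕ) : res p r c = (((c : ℤ) - r : ℤ) : ZMod p) := by
  simp [res]

theorem Addable.sub_one_mem_occ {r c : ℕ} (h : Addable f r c) :
    (c : ℤ) - r - 1 ∈ Occ f :=
  ⟨r, by rw [h.1]; ring⟩

theorem Addable.sub_notMem_occ (hf : IsPartition f) {r c : ℕ} (h : Addable f r c) :
    (c : ℤ) - r ∉ Occ f := by
  rintro ⟨j, hj⟩
  obtain ⟨rfl, hr⟩ := h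
  rcases le_or_gt r j with hrj | hjr
  · have := hf.1 r j hrj
    omega
  · rcases hr with rfl | hr
    · omega
    · have := hf.1 j (r - 1) (by omega)
      omega

theorem IsPartition.qpos_lt_qpos_sub_one_of_addable [NeZero p] (hf : IsPartition f)
    (hqs : QSep p f) {i : ZMod p} (hi : i ≠ i - 1) {r c r' c' : ℕ}
    (h : Addable f r c) (hres : res p r c = i) (h' : Addable f r' c') (hres' : res p r' c' = i)
    (hr : r < r') : qpos p f i < qpos p f (i - 1) := by
  have hy := h.sub_one_mem_occ
  have hz := h'.sub_notMem_occ hf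
  have hzy : (c' : ℤ) - r' ≤ c - r - 1 := by
    have := hf.1 r r' hr.le
    rw [h.1, h'.1]
    omega
  refine hqs.qpos_lt_of_space_lt_bead hf hi hz (by rw [← hres', res_eq_intCast]) hy
    (by rw [← hres, res_eq_intCast]; push_cast; ring) (hzy.lt_of_ne fun he => hz (he ▸ hy))

end Abacus

/-- If `λ` is `p`-quotient-separated and has at least two addable `i`-nodes, then
`q_{i−1}(λ) > q_i(λ)`. -/
theorem stmt10 (p : ℕ) (hp : 2 ≤ p) (f : ℕ → ℕ) (hf : IsPartition f)
    (hqs : QSep p f) (i : ZMod p)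
    (h2 : ∃ r₁ c₁ r₂ c₂ : ℕ, (r₁, c₁) ≠ (r₂, c₂) ∧
      Addable f r₁ c₁ ∧ res p r₁ c₁ = i ∧ Addable f r₂ c₂ ∧ res p r₂ c₂ = i) :
    qpos p f i < qpos p f (i - 1) := by
  obtain ⟨r₁, c₁, r₂, c₂, hne, h₁, hres₁, h₂, hres₂⟩ := h2
  have : Fact (1 < p) := ⟨hp⟩
  have hi : i ≠ i - 1 := fun h => one_ne_zero (sub_eq_self.mp h.symm)
  rcases lt_trichotomy r₁ r₂ with hr | rfl | hr
  · exact hf.qpos_lt_qpos_sub_one_of_addable hqs hi h₁ hres₁ h₂ hres₂ hr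
  · exact absurd (by rw [h₁.1, h₂.1]) hne
  · exact hf.qpos_lt_qpos_sub_one_of_addable hqs hi h₂ hres₂ h₁ hres₁ hr
end

section
/- A partition λ is a Rouquier partition if and only if every partition with the same p-core and the same p-weight as λ is p-quotient-separated. -/
/-- The `p`-weight of `λ`: the number of pairs of positions `x < y` on the same
runner with `x` vacant and `y` occupied. -/
noncomputable def pweight (p : ℕ) (f : ℕ → ℕ) : ℕ :=
  Set.ncard {q : ℤ × ℤ | q.1 < q.2 ∧ ((q.1 : ZMod p) = (q.2 : ZMod p)) ∧
    q.1 ∉ Occ f ∧ q.2 ∈ Occ f}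

/-- `λ` is a Rouquier partition: any two of the values `q_i(λ)` (which are pairwise
distinct, being in distinct residue classes mod `p`) differ by more than `(w−1)p`,
where `w` is the `p`-weight of `λ`. -/
def Rouquier (p : ℕ) (f : ℕ → ℕ) : Prop :=
  ∀ i j : ZMod p, i ≠ j → ((pweight p f : ℤ) - 1) * p < |qpos p f i - qpos p f j|

namespace Abacus

open Set

theorem ncard_iUnion_image {ι α β : Type*} [Fintype ι] {e : ι → β → α}
    (he : ∀ i, Function.Injective (e i))
    (hd : Pairwise fun i j => Disjoint (range (e i)) (range (e j)))
    {T : ι → Set β} (hT : ∀ i, (T i).Finite) :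
    (⋃ i, e i '' T i).ncard = ∑ i, (T i).ncard := by
  rw [ncard_iUnion_of_finite (fun i => (hT i).image _)
    (fun i j hij => (hd hij).mono (image_subset_range _ _) (image_subset_range _ _)),
    finsum_eq_sum_of_fintype]
  simp only [ncard_image_of_injective _ (he _)]

theorem exists_strictAnti_range_eq {B : Set ℤ} (hb : BddAbove B) (hB : ¬ BddBelow B) :
    ∃ β : ℕ → ℤ, StrictAnti β ∧ range β = B := by
  obtain ⟨b, hb⟩ := hb
  have hinf : {n : ℕ | b - n ∈ B}.Infinite := infinite_of_forall_exists_gt fun n => by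
    obtain ⟨x, hx, hxn⟩ := not_bddBelow_iff.1 hB (b - n)
    have := hb hx
    exact ⟨(b - x).toNat, by simpa [Int.toNat_of_nonneg (sub_nonneg.2 this)], by omega⟩
  refine ⟨fun k => b - Nat.nth (fun n : ℕ => b - n ∈ B) k, fun k l hkl => ?_, ?_⟩
  · have : Nat.nth _ k < Nat.nth _ l := Nat.nth_strictMono hinf hkl
    simp only
    omega
  · ext x
    constructor
    · rintro ⟨k, rfl⟩
      exact Nat.nth_mem_of_infinite hinf k
    · intro hx
      have hxb := hb hx
      have hmem : (b - x).toNat ∈ range (Nat.nth fun n : ℕ => b - n ∈ B) := by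
        rw [Nat.range_nth_of_infinite hinf]
        simpa [Int.toNat_of_nonneg (sub_nonneg.2 hxb)]
      obtain ⟨k, hk⟩ := hmem
      exact ⟨k, by simp only [hk]; omega⟩

def IsBeadSet (B : Set ℤ) : Prop := (B ∩ Ici 0).Finite ∧ (Bᶜ ∩ Iio 0).Finite

/-- Pushing all beads of `B` as far up as they go gives `Iio (charge B)`. -/
noncomputable def charge (B : Set ℤ) : ℤ := ((B ∩ Ici 0).ncard : ℤ) - (Bᶜ ∩ Iio 0).ncard

noncomputable def weight (B : Set ℤ) : ℕ := {q : ℤ × ℤ | q.1 < q.2 ∧ q.1 ∉ B ∧ q.2 ∈ B}.ncard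

namespace IsBeadSet

variable {B : Set ℤ}

theorem finite_inter_Ici (hB : IsBeadSet B) (x : ℤ) : (B ∩ Ici x).Finite :=
  (hB.1.union (finite_Icc x 0)).subset fun y ⟨hy, hxy⟩ => by
    by_cases h : 0 ≤ y
    · exact Or.inl ⟨hy, h⟩
    · exact Or.inr ⟨hxy, by omega⟩

theorem finite_compl_inter_Iio (hB : IsBeadSet B) (x : ℤ) : (Bᶜ ∩ Iio x).Finite :=
  (hB.2.union (finite_Icc 0 x)).subset fun y ⟨hy, hxy⟩ => by
    by_cases h : y < 0
    · exact Or.inl ⟨hy, h⟩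
    · exact Or.inr ⟨by omega, le_of_lt hxy⟩

theorem bddAbove (hB : IsBeadSet B) : BddAbove B :=
  (hB.1.bddAbove.union bddAbove_Iio).mono fun y hy => by
    by_cases h : 0 ≤ y
    · exact Or.inl ⟨hy, h⟩
    · exact Or.inr (not_le.1 h)

theorem bddBelow_compl (hB : IsBeadSet B) : BddBelow Bᶜ :=
  (hB.2.bddBelow.union bddBelow_Ici).mono fun y hy => by
    by_cases h : y < 0
    · exact Or.inl ⟨hy, h⟩
    · exact Or.inr (not_lt.1 h)

theorem not_bddBelow (hB : IsBeadSet B) : ¬ BddBelow B := by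
  rintro ⟨a, ha⟩
  have hsub : Iio (min a 0) ⊆ Bᶜ ∩ Iio 0 := fun y hy => by
    simp only [mem_Iio, lt_min_iff] at hy
    exact ⟨fun hyB => absurd (ha hyB) (not_le.2 hy.1), hy.2⟩
  exact Iio_infinite _ (hB.2.subset hsub)

theorem nonempty (hB : IsBeadSet B) : B.Nonempty :=
  nonempty_of_not_bddBelow hB.not_bddBelow

theorem compl_nonempty (hB : IsBeadSet B) : Bᶜ.Nonempty := by
  obtain ⟨b, hb⟩ := hB.bddAbove
  exact ⟨b + 1, fun h => absurd (hb h) (by omega)⟩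

theorem finite_pairs (hB : IsBeadSet B) :
    {q : ℤ × ℤ | q.1 < q.2 ∧ q.1 ∉ B ∧ q.2 ∈ B}.Finite := by
  obtain ⟨a, ha⟩ := hB.bddBelow_compl
  obtain ⟨b, hb⟩ := hB.bddAbove
  refine ((finite_Icc a b).prod (finite_Icc a b)).subset fun q ⟨hlt, h1, h2⟩ => ?_
  have := ha h1
  have := hb h2
  exact ⟨⟨by omega, by omega⟩, ⟨by omega, by omega⟩⟩

theorem ncard_compl_inter_Iio_add_one (hB : IsBeadSet B) (x : ℤ) :
    ((Bᶜ ∩ Iio (x + 1)).ncard : ℤ) - (B ∩ Ici (x + 1)).ncard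
      = ((Bᶜ ∩ Iio x).ncard : ℤ) - (B ∩ Ici x).ncard + 1 := by
  have hIio : Iio (x + 1) = insert x (Iio x) := by rw [Iio_add_one_eq_Iic, Iio_insert]
  have hIci : Ici x = insert x (Ici (x + 1)) := by rw [Ici_add_one_eq_Ioi, Ioi_insert]
  by_cases hx : x ∈ B
  · rw [hIio, hIci, inter_insert_of_notMem (by simpa), inter_insert_of_mem hx,
      ncard_insert_of_notMem (by simp) (hB.finite_inter_Ici _)]
    push_cast; ring
  · rw [hIio, hIci, inter_insert_of_mem hx, inter_insert_of_notMem hx,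
      ncard_insert_of_notMem (by simp) (hB.finite_compl_inter_Iio _)]
    push_cast; ring

theorem ncard_compl_inter_Iio_sub (hB : IsBeadSet B) (x : ℤ) :
    ((Bᶜ ∩ Iio x).ncard : ℤ) - (B ∩ Ici x).ncard = x - charge B := by
  induction x using Int.induction_on with
  | zero => simp only [charge]; ring
  | succ n ih => rw [hB.ncard_compl_inter_Iio_add_one, ih]; ring
  | pred n ih =>
    have := hB.ncard_compl_inter_Iio_add_one (-n - 1)
    rw [show -(n : ℤ) - 1 + 1 = -n by ring, ih] at this
    omega

theorem ncard_inter_Ici_le_weight (hB : IsBeadSet B) {s : ℤ} (hs : s ∉ B) :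
    (B ∩ Ici s).ncard ≤ weight B :=
  ncard_le_ncard_of_injOn (fun y => (s, y))
    (fun y ⟨hy, hsy⟩ => ⟨show s < y from lt_of_le_of_ne hsy fun h => hs (h ▸ hy), hs, hy⟩)
    (fun _ _ _ _ h => congrArg Prod.snd h) hB.finite_pairs

theorem ncard_compl_inter_Iic_le_weight (hB : IsBeadSet B) {l : ℤ} (hl : l ∈ B) :
    (Bᶜ ∩ Iic l).ncard ≤ weight B :=
  ncard_le_ncard_of_injOn (fun x => (x, l))
    (fun x ⟨hx, hxl⟩ => ⟨show x < l from lt_of_le_of_ne hxl fun h => hx (h ▸ hl), hx, hl⟩)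
    (fun _ _ _ _ h => congrArg Prod.fst h) hB.finite_pairs

theorem charge_le_sInf_compl_add_weight (hB : IsBeadSet B) :
    charge B ≤ sInf Bᶜ + weight B := by
  have hs : sInf Bᶜ ∉ B := Int.csInf_mem hB.compl_nonempty hB.bddBelow_compl
  have hgaps : Bᶜ ∩ Iio (sInf Bᶜ) = ∅ :=
    eq_empty_of_forall_notMem fun x ⟨hx, hlt⟩ => not_le.2 hlt (csInf_le hB.bddBelow_compl hx)
  have := hB.ncard_compl_inter_Iio_sub (sInf Bᶜ)
  rw [hgaps, ncard_empty] at this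
  have := hB.ncard_inter_Ici_le_weight hs
  omega

theorem sSup_lt_charge_add_weight (hB : IsBeadSet B) : sSup B < charge B + weight B := by
  have hl : sSup B ∈ B := Int.csSup_mem hB.nonempty hB.bddAbove
  have hbeads : B ∩ Ici (sSup B + 1) = ∅ :=
    eq_empty_of_forall_notMem fun x ⟨hx, hle⟩ => by
      have := le_csSup hB.bddAbove hx
      simp only [mem_Ici] at hle
      omega
  have := hB.ncard_compl_inter_Iio_sub (sSup B + 1)
  rw [hbeads, ncard_empty, Iio_add_one_eq_Iic] at this
  have := hB.ncard_compl_inter_Iic_le_weight hl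
  omega

theorem exists_occ_eq (hB : IsBeadSet B) (h0 : charge B = 0) :
    ∃ g : ℕ → ℕ, IsPartition g ∧ Occ g = B := by
  obtain ⟨β, hβ, hrange⟩ := exists_strictAnti_range_eq hB.bddAbove hB.not_bddBelow
  have hbeads (k : ℕ) : (B ∩ Ici (β k)).ncard = k + 1 := by
    have : B ∩ Ici (β k) = β '' Iic k := by
      ext x
      rw [← hrange]
      constructor
      · rintro ⟨⟨l, rfl⟩, hl⟩
        exact ⟨l, hβ.le_iff_ge.1 hl, rfl⟩
      · rintro ⟨l, hl, rfl⟩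
        exact ⟨⟨l, rfl⟩, hβ.le_iff_ge.2 hl⟩
    rw [this, ncard_image_of_injective _ hβ.injective, ncard_Iic_nat]
  have hparts (k : ℕ) : ((Bᶜ ∩ Iio (β k)).ncard : ℤ) = β k + (k + 1) := by
    have := hB.ncard_compl_inter_Iio_sub (β k)
    rw [hbeads, h0] at this
    push_cast at this
    omega
  have hβ_le (k : ℕ) : β k + k ≤ β 0 := by
    induction k with
    | zero => simp
    | succ k ih => have : β (k + 1) < β k := hβ (by omega); push_cast; omega
  obtain ⟨a, ha⟩ := hB.bddBelow_compl
  refine ⟨fun k => (Bᶜ ∩ Iio (β k)).ncard,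
    ⟨fun m n hmn => ?_, (β 0 - a).toNat, fun n hn => ?_⟩, ?_⟩
  · exact ncard_le_ncard (inter_subset_inter_right _ (Iio_subset_Iio (hβ.antitone hmn)))
      (hB.finite_compl_inter_Iio _)
  · have := hβ_le n
    suffices Bᶜ ∩ Iio (β n) = ∅ by simp only [this, ncard_empty]
    refine eq_empty_of_forall_notMem fun x ⟨hx, hxn⟩ => ?_
    have := ha hx
    simp only [mem_Iio] at hxn
    omega
  · ext x
    simp only [Occ, mem_ofPred_eq, hparts, add_sub_cancel_right]
    rw [← hrange]
    exact exists_congr fun j => eq_comm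

end IsBeadSet

theorem isBeadSet_occ_and_charge_eq_zero {f : ℕ → ℕ} (hf : IsPartition f) :
    IsBeadSet (Occ f) ∧ charge (Occ f) = 0 := by
  obtain ⟨hanti, N, hN⟩ := hf
  have hbelow : (Occ f)ᶜ ∩ Iio (-N) = ∅ := eq_empty_of_forall_notMem fun x ⟨hx, hxN⟩ => by
    simp only [mem_Iio] at hxN
    exact hx ⟨(-x - 1).toNat, by rw [hN _ (by omega)]; push_cast; omega⟩
  have habove : Occ f ∩ Ici (-N) = (fun j : ℕ => (f j : ℤ) - (j + 1)) '' Iio N := by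
    ext x
    constructor
    · rintro ⟨⟨j, rfl⟩, hj⟩
      refine ⟨j, ?_, rfl⟩
      by_contra h
      simp only [mem_Ici, hN j (not_lt.1 h)] at hj
      simp only [mem_Iio] at h
      omega
    · rintro ⟨j, hj, rfl⟩
      simp only [mem_Iio] at hj
      exact ⟨⟨j, rfl⟩, by simp only [mem_Ici]; omega⟩
  have hinj : Function.Injective fun j : ℕ => (f j : ℤ) - (j + 1) :=
    StrictAnti.injective fun j k hjk => by have := hanti j k hjk.le; omega
  have hfin : (Occ f ∩ Ici (-N)).Finite := habove ▸ (finite_Iio N).image _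
  have hB : IsBeadSet (Occ f) :=
    ⟨hfin.subset (inter_subset_inter_right _ (Ici_subset_Ici.2 (by omega))),
      (finite_Ico (-N : ℤ) 0).subset fun x ⟨hx, hx0⟩ => ⟨not_lt.1 fun h =>
        (eq_empty_iff_forall_notMem.1 hbelow) x ⟨hx, h⟩, hx0⟩⟩
  refine ⟨hB, ?_⟩
  have := hB.ncard_compl_inter_Iio_sub (-N)
  rw [hbelow, habove, ncard_image_of_injective _ hinj, ncard_Iio_nat, ncard_empty] at this
  omega

theorem isBeadSet_Iic_diff_singleton (m a : ℤ) : IsBeadSet (Iic m \ {a}) :=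
  ⟨(finite_Icc 0 m).subset fun _ ⟨⟨hm, _⟩, h0⟩ => ⟨h0, hm⟩,
    (finite_Icc (min a m) 0).subset fun x ⟨hx, hx0⟩ => by
      simp only [mem_compl_iff, mem_sdiff, mem_Iic, mem_singleton_iff, not_and, not_not] at hx
      simp only [mem_Iio] at hx0
      by_cases hxm : x ≤ m
      · exact ⟨(min_le_left a m).trans (hx hxm).ge, hx0.le⟩
      · exact ⟨by omega, hx0.le⟩⟩

theorem charge_Iic_diff_singleton {m a : ℤ} (ha : a ≤ m) : charge (Iic m \ {a}) = m := by
  have hgaps : (Iic m \ {a})ᶜ ∩ Iio (m + 1) = {a} := by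
    rw [Iio_add_one_eq_Iic, compl_sdiff, union_inter_distrib_right, compl_inter_self,
      union_empty, inter_eq_left.2 (singleton_subset_iff.2 (mem_Iic.2 ha))]
  have hbeads : Iic m \ {a} ∩ Ici (m + 1) = ∅ :=
    eq_empty_of_forall_notMem fun x ⟨⟨hxm, _⟩, hx⟩ => by
      simp only [mem_Iic, mem_Ici] at hxm hx
      omega
  have := (isBeadSet_Iic_diff_singleton m a).ncard_compl_inter_Iio_sub (m + 1)
  rw [hgaps, hbeads, ncard_singleton, ncard_empty] at this
  omega

theorem weight_Iic_diff_singleton (m a : ℤ) : weight (Iic m \ {a}) = (m - a).toNat := by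
  have hpairs : {q : ℤ × ℤ | q.1 < q.2 ∧ q.1 ∉ Iic m \ {a} ∧ q.2 ∈ Iic m \ {a}}
      = (fun y => (a, y)) '' Ioc a m := by
    ext ⟨x, y⟩
    simp only [mem_ofPred_eq, mem_sdiff, mem_Iic, mem_singleton_iff, not_and, not_not,
      mem_image, mem_Ioc, Prod.mk.injEq]
    constructor
    · rintro ⟨hxy, hx, hym, hya⟩
      have hxa : x = a := by by_contra h; exact absurd (hx (by omega)) h
      exact ⟨y, ⟨by omega, hym⟩, hxa.symm, rfl⟩
    · rintro ⟨y, ⟨hay, hym⟩, rfl, rfl⟩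
      exact ⟨hay, fun _ => rfl, hym, by omega⟩
  rw [weight, hpairs, ncard_image_of_injective _ (Prod.mk_right_injective a),
    ← Finset.coe_Ioc, ncard_coe_finset, Int.card_Ioc]

def runnerPos (p : ℕ) (i : ZMod p) (t : ℤ) : ℤ := i.val + p * t

def runner (p : ℕ) (i : ZMod p) (B : Set ℤ) : Set ℤ := runnerPos p i ⁻¹' B

section Runners

variable {p : ℕ} [NeZero p]

theorem strictMono_runnerPos (i : ZMod p) : StrictMono (runnerPos p i) := fun s t hst => by
  have : (0 : ℤ) < p := by exact_mod_cast NeZero.pos p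
  simp only [runnerPos]
  nlinarith

theorem intCast_runnerPos (i : ZMod p) (t : ℤ) : ((runnerPos p i t : ℤ) : ZMod p) = i := by
  simp [runnerPos]

theorem range_runnerPos (i : ZMod p) : range (runnerPos p i) = {x : ℤ | (x : ZMod p) = i} := by
  ext x
  refine ⟨fun ⟨t, ht⟩ => ht ▸ intCast_runnerPos i t, fun hx => ⟨x / p, ?_⟩⟩
  rw [runnerPos, ← hx, ZMod.val_intCast, Int.emod_add_mul_ediv]

theorem runnerPos_ediv (i : ZMod p) (t : ℤ) : runnerPos p i t / p = t := by
  have : (i.val : ℤ) < p := by exact_mod_cast ZMod.val_lt i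
  rw [runnerPos, Int.add_mul_ediv_left _ _ (by exact_mod_cast NeZero.ne p),
    Int.ediv_eq_zero_of_lt (by positivity) this, zero_add]

theorem runnerPos_nonneg_iff {i : ZMod p} {t : ℤ} : 0 ≤ runnerPos p i t ↔ 0 ≤ t := by
  have : (i.val : ℤ) < p := by exact_mod_cast ZMod.val_lt i
  simp only [runnerPos]
  constructor
  · intro h
    by_contra ht
    nlinarith
  · intro h
    positivity

theorem val_le_runnerPos_iff {i : ZMod p} {t : ℤ} : (i.val : ℤ) ≤ runnerPos p i t ↔ 0 ≤ t := by
  have : (0 : ℤ) < p := by exact_mod_cast NeZero.pos p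
  simp only [runnerPos, le_add_iff_nonneg_right]
  exact ⟨fun h => nonneg_of_mul_nonneg_right h this, fun h => by positivity⟩

theorem disjoint_range_runnerPos {i j : ZMod p} (hij : i ≠ j) :
    Disjoint (range (runnerPos p i)) (range (runnerPos p j)) := by
  rw [range_runnerPos, range_runnerPos]
  exact disjoint_left.2 fun x hi hj => hij (hi.symm.trans hj)

theorem image_runner (i : ZMod p) (S : Set ℤ) :
    runnerPos p i '' runner p i S = {x : ℤ | (x : ZMod p) = i ∧ x ∈ S} := by
  rw [runner, image_preimage_eq_inter_range, range_runnerPos, inter_comm]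
  rfl

theorem iUnion_image_runner (S : Set ℤ) : ⋃ i, runnerPos p i '' runner p i S = S := by
  ext x
  simp [image_runner]

theorem finite_iff_forall_finite_runner {S : Set ℤ} :
    S.Finite ↔ ∀ i, (runner p i S).Finite :=
  ⟨fun hS i => hS.preimage (strictMono_runnerPos i).injective.injOn, fun h =>
    iUnion_image_runner (p := p) S ▸ finite_iUnion fun i => (h i).image _⟩

theorem ncard_eq_sum_ncard_runner {S : Set ℤ} (hS : S.Finite) :
    S.ncard = ∑ i : ZMod p, (runner p i S).ncard := by
  conv_lhs => rw [← iUnion_image_runner (p := p) S]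
  exact ncard_iUnion_image (fun i => (strictMono_runnerPos i).injective)
    (fun i j hij => disjoint_range_runnerPos hij) (finite_iff_forall_finite_runner.1 hS)

theorem runner_inter_Ici_zero (i : ZMod p) (B : Set ℤ) :
    runner p i (B ∩ Ici 0) = runner p i B ∩ Ici 0 := by
  ext t
  simp only [runner, mem_preimage, mem_inter_iff, mem_Ici, runnerPos_nonneg_iff]

theorem runner_compl_inter_Iio_zero (i : ZMod p) (B : Set ℤ) :
    runner p i (Bᶜ ∩ Iio 0) = (runner p i B)ᶜ ∩ Iio 0 := by
  ext t
  simp only [runner, mem_preimage, mem_inter_iff, mem_compl_iff, mem_Iio, ← not_le,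
    runnerPos_nonneg_iff]

theorem isBeadSet_iff_forall_runner {B : Set ℤ} :
    IsBeadSet B ↔ ∀ i, IsBeadSet (runner p i B) := by
  rw [IsBeadSet, finite_iff_forall_finite_runner (p := p),
    finite_iff_forall_finite_runner (p := p), ← forall_and]
  simp only [runner_inter_Ici_zero, runner_compl_inter_Iio_zero, IsBeadSet]

theorem IsBeadSet.charge_eq_sum_charge_runner {B : Set ℤ} (hB : IsBeadSet B) :
    charge B = ∑ i : ZMod p, charge (runner p i B) := by
  rw [charge, ncard_eq_sum_ncard_runner (p := p) hB.1, ncard_eq_sum_ncard_runner (p := p) hB.2]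
  simp only [runner_inter_Ici_zero, runner_compl_inter_Iio_zero, Nat.cast_sum,
    ← Finset.sum_sub_distrib, charge]

theorem exists_partition_runner_eq (R : ZMod p → Set ℤ) (hR : ∀ i, IsBeadSet (R i))
    (h0 : ∑ i, charge (R i) = 0) :
    ∃ g : ℕ → ℕ, IsPartition g ∧ ∀ i, runner p i (Occ g) = R i := by
  set B : Set ℤ := {x | x / p ∈ R (x : ZMod p)}
  have hrun (i : ZMod p) : runner p i B = R i := by
    ext t
    simp only [runner, B, mem_preimage, mem_ofPred_eq, runnerPos_ediv, intCast_runnerPos]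
  have hB : IsBeadSet B := isBeadSet_iff_forall_runner.2 fun i => hrun i ▸ hR i
  have hB0 : charge B = 0 := by simpa [hB.charge_eq_sum_charge_runner (p := p), hrun]
  obtain ⟨g, hg, hocc⟩ := hB.exists_occ_eq hB0
  exact ⟨g, hg, fun i => hocc ▸ hrun i⟩

end Runners

section Partitions

variable {p : ℕ} [NeZero p] {f : ℕ → ℕ}

theorem qpos_eq_runnerPos_charge (f : ℕ → ℕ) (i : ZMod p) :
    qpos p f i = runnerPos p i (charge (runner p i (Occ f))) := by
  have hbeads : {x : ℤ | x ∈ Occ f ∧ (x : ZMod p) = i ∧ (i.val : ℤ) ≤ x}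
      = runnerPos p i '' (runner p i (Occ f) ∩ Ici 0) := by
    ext x
    constructor
    · rintro ⟨hx, hi, hle⟩
      obtain ⟨t, rfl⟩ : x ∈ range (runnerPos p i) := by rwa [range_runnerPos]
      exact ⟨t, ⟨hx, val_le_runnerPos_iff.1 hle⟩, rfl⟩
    · rintro ⟨t, ⟨ht, h0⟩, rfl⟩
      exact ⟨ht, intCast_runnerPos i t, val_le_runnerPos_iff.2 h0⟩
  have hgaps : {x : ℤ | x ∉ Occ f ∧ (x : ZMod p) = i ∧ x < (i.val : ℤ)}
      = runnerPos p i '' ((runner p i (Occ f))ᶜ ∩ Iio 0) := by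
    ext x
    constructor
    · rintro ⟨hx, hi, hlt⟩
      obtain ⟨t, rfl⟩ : x ∈ range (runnerPos p i) := by rwa [range_runnerPos]
      exact ⟨t, ⟨hx, not_le.1 fun h => not_le.2 hlt (val_le_runnerPos_iff.2 h)⟩, rfl⟩
    · rintro ⟨t, ⟨ht, h0⟩, rfl⟩
      exact ⟨ht, intCast_runnerPos i t, not_le.1 fun h => not_le.2 h0 (val_le_runnerPos_iff.1 h)⟩
  rw [qpos, hbeads, hgaps, ncard_image_of_injective _ (strictMono_runnerPos i).injective,
    ncard_image_of_injective _ (strictMono_runnerPos i).injective, runnerPos, charge]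

theorem intCast_qpos (f : ℕ → ℕ) (i : ZMod p) : ((qpos p f i : ℤ) : ZMod p) = i := by
  rw [qpos_eq_runnerPos_charge, intCast_runnerPos]

theorem qpos_sub_qpos_ne_mul {i j : ZMod p} (hij : i ≠ j) (n : ℤ) :
    qpos p f i - qpos p f j ≠ n * p := fun h => hij <| by
  have := congrArg (fun z : ℤ => (z : ZMod p)) h
  simpa [intCast_qpos, sub_eq_zero] using this

theorem isBeadSet_runner (hf : IsPartition f) (i : ZMod p) : IsBeadSet (runner p i (Occ f)) :=
  isBeadSet_iff_forall_runner.1 (isBeadSet_occ_and_charge_eq_zero hf).1 i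

theorem firstSpace_eq (hf : IsPartition f) (i : ZMod p) :
    firstSpace p f i = runnerPos p i (sInf (runner p i (Occ f))ᶜ) := by
  have hR := isBeadSet_runner hf i
  have hset : {x : ℤ | (x : ZMod p) = i ∧ x ∉ Occ f} = runnerPos p i '' runner p i (Occ f)ᶜ :=
    (image_runner i _).symm
  rw [firstSpace, hset]
  exact ((strictMono_runnerPos i).monotone.map_isLeast
    ⟨Int.csInf_mem hR.compl_nonempty hR.bddBelow_compl,
      fun _ h => csInf_le hR.bddBelow_compl h⟩).csInf_eq

theorem lastBead_eq (hf : IsPartition f) (i : ZMod p) :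
    lastBead p f i = runnerPos p i (sSup (runner p i (Occ f))) := by
  have hR := isBeadSet_runner hf i
  rw [lastBead, ← image_runner]
  exact ((strictMono_runnerPos i).monotone.map_isGreatest
    ⟨Int.csSup_mem hR.nonempty hR.bddAbove, fun _ h => le_csSup hR.bddAbove h⟩).csSup_eq

theorem firstSpace_le_runnerPos (hf : IsPartition f) {i : ZMod p} {t : ℤ}
    (ht : t ∉ runner p i (Occ f)) : firstSpace p f i ≤ runnerPos p i t := by
  rw [firstSpace_eq hf]
  exact (strictMono_runnerPos i).monotone (csInf_le (isBeadSet_runner hf i).bddBelow_compl ht)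

theorem runnerPos_le_lastBead (hf : IsPartition f) {i : ZMod p} {t : ℤ}
    (ht : t ∈ runner p i (Occ f)) : runnerPos p i t ≤ lastBead p f i := by
  rw [lastBead_eq hf]
  exact (strictMono_runnerPos i).monotone (le_csSup (isBeadSet_runner hf i).bddAbove ht)

theorem pweight_eq_sum_weight_runner (hf : IsPartition f) :
    pweight p f = ∑ i : ZMod p, weight (runner p i (Occ f)) := by
  have hpairs : {q : ℤ × ℤ | q.1 < q.2 ∧ ((q.1 : ZMod p) = (q.2 : ZMod p)) ∧
      q.1 ∉ Occ f ∧ q.2 ∈ Occ f} = ⋃ i, Prod.map (runnerPos p i) (runnerPos p i) ''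
        {q : ℤ × ℤ | q.1 < q.2 ∧ q.1 ∉ runner p i (Occ f) ∧ q.2 ∈ runner p i (Occ f)} := by
    ext ⟨x, y⟩
    simp only [mem_ofPred_eq, mem_iUnion, mem_image, Prod.exists, Prod.map, Prod.mk.injEq]
    constructor
    · rintro ⟨hxy, hres, hx, hy⟩
      obtain ⟨i, hi⟩ : ∃ i : ZMod p, (x : ZMod p) = i := ⟨_, rfl⟩
      obtain ⟨t, rfl⟩ : x ∈ range (runnerPos p i) := by rwa [range_runnerPos]
      obtain ⟨s, rfl⟩ : y ∈ range (runnerPos p i) := by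
        rw [range_runnerPos]; exact hres.symm.trans hi
      exact ⟨i, t, s, ⟨(strictMono_runnerPos i).lt_iff_lt.1 hxy, hx, hy⟩, rfl, rfl⟩
    · rintro ⟨i, t, s, ⟨hts, ht, hs⟩, rfl, rfl⟩
      exact ⟨(strictMono_runnerPos i) hts, by rw [intCast_runnerPos, intCast_runnerPos], ht, hs⟩
  rw [pweight, hpairs]
  refine ncard_iUnion_image (fun i => (strictMono_runnerPos i).injective.prodMap
    (strictMono_runnerPos i).injective) (fun i j hij => ?_)
    (fun i => (isBeadSet_runner hf i).finite_pairs)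
  simp only [range_prodMap]
  exact (disjoint_range_runnerPos hij).set_prod_left _ _

theorem weight_runner_add_weight_runner_le (hf : IsPartition f) {i j : ZMod p} (hij : i ≠ j) :
    weight (runner p i (Occ f)) + weight (runner p j (Occ f)) ≤ pweight p f := by
  rw [pweight_eq_sum_weight_runner hf]
  calc _ = ∑ k ∈ {i, j}, weight (runner p k (Occ f)) := (Finset.sum_pair hij).symm
    _ ≤ _ := Finset.sum_le_sum_of_subset (Finset.subset_univ _)

theorem qpos_sub_le_firstSpace (hf : IsPartition f) (i : ZMod p) :
    qpos p f i - p * weight (runner p i (Occ f)) ≤ firstSpace p f i := by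
  have := (isBeadSet_runner hf i).charge_le_sInf_compl_add_weight
  rw [qpos_eq_runnerPos_charge, firstSpace_eq hf, runnerPos, runnerPos]
  nlinarith [(Nat.cast_nonneg p : (0 : ℤ) ≤ p)]

theorem lastBead_add_le (hf : IsPartition f) (i : ZMod p) :
    lastBead p f i + p ≤ qpos p f i + p * weight (runner p i (Occ f)) := by
  have := (isBeadSet_runner hf i).sSup_lt_charge_add_weight
  rw [qpos_eq_runnerPos_charge, lastBead_eq hf, runnerPos, runnerPos]
  nlinarith [(Nat.cast_nonneg p : (0 : ℤ) ≤ p)]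

end Partitions

section Rouquier

variable {p : ℕ} [NeZero p] {f : ℕ → ℕ}

theorem qsep_of_rouquier (hf : IsPartition f) (hR : Rouquier p f) : QSep p f := by
  rintro ⟨i, j, hij, hij_lt, hji_lt⟩
  have hw := weight_runner_add_weight_runner_le hf hij
  have hpw : (p : ℤ) * (weight (runner p i (Occ f)) + weight (runner p j (Occ f)))
      ≤ p * pweight p f := mul_le_mul_of_nonneg_left (by exact_mod_cast hw) (Nat.cast_nonneg p)
  have := qpos_sub_le_firstSpace hf i
  have := qpos_sub_le_firstSpace hf j
  have := lastBead_add_le hf i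
  have := lastBead_add_le hf j
  exact lt_asymm (hR i j hij) (abs_sub_lt_iff.2 ⟨by linarith, by linarith⟩)

/-- Runner `k` of the core of `f` is `Iio c` with `c = charge (runner p k (Occ f))`; here the
bead at `c - w` on runner `j` is moved to the gap `c`. -/
theorem exists_partition_runner_eq_Iic_diff (hf : IsPartition f) (j : ZMod p) (w : ℕ) :
    ∃ g : ℕ → ℕ, IsPartition g ∧ ∀ k, runner p k (Occ g) = Iic (charge (runner p k (Occ f))) \
      {charge (runner p k (Occ f)) - if k = j then w else 0} := by
  have hd (k : ZMod p) : charge (runner p k (Occ f)) - (if k = j then w else 0)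
      ≤ charge (runner p k (Occ f)) := sub_le_self _ (by split_ifs <;> positivity)
  refine exists_partition_runner_eq _ (fun k => isBeadSet_Iic_diff_singleton _ _) ?_
  simp only [charge_Iic_diff_singleton (hd _)]
  rw [← (isBeadSet_occ_and_charge_eq_zero hf).1.charge_eq_sum_charge_runner,
    (isBeadSet_occ_and_charge_eq_zero hf).2]

theorem exists_not_qsep (hf : IsPartition f) {i j : ZMod p} (hij : i ≠ j)
    (hle : |qpos p f i - qpos p f j| ≤ ((pweight p f : ℤ) - 1) * p) :
    ∃ g : ℕ → ℕ, IsPartition g ∧ (∀ k, qpos p g k = qpos p f k) ∧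
      pweight p g = pweight p f ∧ ¬ QSep p g := by
  wlog hlt : qpos p f i < qpos p f j generalizing i j
  · have hne : qpos p f j ≠ qpos p f i :=
      sub_ne_zero.1 (by simpa using qpos_sub_qpos_ne_mul (f := f) hij.symm 0)
    exact this hij.symm (by rwa [abs_sub_comm]) (lt_of_le_of_ne (not_lt.1 hlt) hne)
  set w := pweight p f
  have hw : 0 < w := Nat.pos_of_ne_zero fun h => by
    rw [h, Nat.cast_zero, zero_sub, neg_one_mul] at hle
    linarith [abs_nonneg (qpos p f i - qpos p f j), (NeZero.pos p : 0 < p)]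
  have hstrict : qpos p f j - qpos p f i < ((w : ℤ) - 1) * p :=
    lt_of_le_of_ne ((le_abs_self _).trans (by rwa [abs_sub_comm]))
      (qpos_sub_qpos_ne_mul hij.symm _)
  set m : ZMod p → ℤ := fun k => charge (runner p k (Occ f))
  have hq (k : ZMod p) : qpos p f k = runnerPos p k (m k) := qpos_eq_runnerPos_charge f k
  obtain ⟨g, hg, hrun⟩ := exists_partition_runner_eq_Iic_diff hf j w
  refine ⟨g, hg, fun k => ?_, ?_, fun hsep => hsep ⟨i, j, hij, ?_, ?_⟩⟩
  · rw [qpos_eq_runnerPos_charge, hrun, charge_Iic_diff_singleton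
      (sub_le_self _ (by split_ifs <;> positivity)), hq]
  · rw [pweight_eq_sum_weight_runner hg]
    simp [hrun, weight_Iic_diff_singleton, apply_ite Int.toNat]
  · calc firstSpace p g i ≤ runnerPos p i (m i) :=
          firstSpace_le_runnerPos hg (by simp [hrun, hij, m])
      _ < runnerPos p j (m j) := by rwa [← hq, ← hq]
      _ ≤ lastBead p g j := runnerPos_le_lastBead hg <| by
          rw [hrun]
          exact ⟨mem_Iic.2 le_rfl, (sub_lt_self _ (by simp [hw])).ne'⟩
  · calc firstSpace p g j ≤ runnerPos p j (m j - w) :=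
          firstSpace_le_runnerPos hg (by simp [hrun, m])
      _ < runnerPos p i (m i - 1) := by
          rw [hq, hq] at hstrict
          simp only [runnerPos] at hstrict ⊢
          linarith
      _ ≤ lastBead p g i := runnerPos_le_lastBead hg (by simp [hrun, hij, m])

end Rouquier

end Abacus

/-- `λ` is a Rouquier partition iff every partition with the same `p`-core (i.e. the
same values `q_i`) and the same `p`-weight as `λ` is `p`-quotient-separated. -/
theorem stmt12 (p : ℕ) (hp : 2 ≤ p) (f : ℕ → ℕ) (hf : IsPartition f) :
    Rouquier p f ↔
      ∀ g : ℕ → ℕ, IsPartition g → (∀ i : ZMod p, qpos p g i = qpos p f i) →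
        pweight p g = pweight p f → QSep p g := by
  have : NeZero p := ⟨by omega⟩
  constructor
  · intro hR g hg hq hw
    refine Abacus.qsep_of_rouquier hg fun i j hij => ?_
    rw [hq, hq, hw]
    exact hR i j hij
  · intro H
    by_contra hR
    simp only [Rouquier, not_forall, not_lt] at hR
    obtain ⟨i, j, hij, hle⟩ := hR
    obtain ⟨g, hg, hq, hw, hsep⟩ := Abacus.exists_not_qsep hf hij hle
    exact hsep (H g hg hq hw)
end
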